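/- arXiv:2305.05482 — 13 statements merged into one kernel-verified Lean document; each statement's English description precedes it below -/
import Mathlib

section
/- Let A ∈ ℝ^{m×n} and b ∈ ℝ^m be such that the linear system Ax = b is consistent. Let S be a measurable random m×q real matrix on a probability space (Ω, 𝓕, P) such that ω ↦ S(ω)S(ω)ᵀ is Bochner integrable, and define f : ℝⁿ → ℝ by f(x) := E[(1/2)‖S(ω)ᵀ(Ax − b)‖₂²] (equivalently, f(x) = (1/2)(Ax − b)ᵀ E[SSᵀ] (Ax − b)). Then the set of global minimizers of f equals the solution set {x ∈ ℝⁿ : Ax = b} if and only if the null space of Aᵀ E[SSᵀ] A equals the null space of A. -/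
open Matrix MeasureTheory

/-- Lemma 2.1 (exactness of the stochastic reformulation): for a consistent linear
system `A x = b` and a random matrix `S` with `E[S Sᵀ]` finite, the set of global
minimizers of `f(x) = E[(1/2)‖Sᵀ(Ax − b)‖₂²]` equals the solution set of `A x = b`
iff `Null(Aᵀ E[S Sᵀ] A) = Null(A)`. -/
theorem minimizers_eq_solutions_iff_ker_eq
    {m n q : ℕ} (A : Matrix (Fin m) (Fin n) ℝ) (b : Fin m → ℝ)
    (hcons : ∃ x : Fin n → ℝ, A.mulVec x = b)
    {Ω : Type*} [MeasurableSpace Ω] (P : Measure Ω) [IsProbabilityMeasure P]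
    (S : Ω → Matrix (Fin m) (Fin q) ℝ)
    (hSmeas : ∀ i j, Measurable fun ω => S ω i j)
    (hSint : ∀ i j, Integrable (fun ω => (S ω * (S ω)ᵀ) i j) P)
    (E : Matrix (Fin m) (Fin m) ℝ)
    (hE : ∀ i j, E i j = ∫ ω, (S ω * (S ω)ᵀ) i j ∂P)
    (f : (Fin n → ℝ) → ℝ)
    (hf : ∀ x, f x = ∫ ω, (1 / 2) *
      (((S ω)ᵀ.mulVec (A.mulVec x - b)) ⬝ᵥ ((S ω)ᵀ.mulVec (A.mulVec x - b))) ∂P) :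
    {x : Fin n → ℝ | ∀ y, f x ≤ f y} = {x : Fin n → ℝ | A.mulVec x = b} ↔
      LinearMap.ker (Aᵀ * E * A).mulVecLin = LinearMap.ker A.mulVecLin := by
  obtain ⟨x₀, hx₀⟩ := hcons
  -- adjoint identity over arbitrary shapes
  have hAdj : ∀ {a c : ℕ} (B : Matrix (Fin a) (Fin c) ℝ) (v : Fin a → ℝ) (w : Fin c → ℝ),
      v ⬝ᵥ B.mulVec w = (Bᵀ.mulVec v) ⬝ᵥ w := by
    intro a c B v w
    rw [Matrix.dotProduct_mulVec, ← Matrix.mulVec_transpose]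
  -- expanding a quadratic form as a double sum
  have hquad : ∀ (M : Matrix (Fin m) (Fin m) ℝ) (r : Fin m → ℝ),
      r ⬝ᵥ M.mulVec r = ∑ i, ∑ k, (r i * r k) * M i k := by
    intro M r
    simp only [dotProduct, mulVec, Finset.mul_sum]
    refine Finset.sum_congr rfl fun i _ => Finset.sum_congr rfl fun k _ => by ring
  -- ‖Sᵀ r‖² = r ⬝ᵥ (S Sᵀ) r
  have hnorm : ∀ (r : Fin m → ℝ) (ω : Ω),
      ((S ω)ᵀ.mulVec r) ⬝ᵥ ((S ω)ᵀ.mulVec r) = r ⬝ᵥ (S ω * (S ω)ᵀ).mulVec r := by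
    intro r ω
    rw [← Matrix.mulVec_mulVec, hAdj, Matrix.transpose_transpose]
    exact dotProduct_comm _ _
  -- pointwise identity
  have hpt : ∀ (r : Fin m → ℝ) (ω : Ω),
      (1/2 : ℝ) * (((S ω)ᵀ.mulVec r) ⬝ᵥ ((S ω)ᵀ.mulVec r)) =
      ∑ i, ∑ k, ((1/2 : ℝ) * (r i * r k)) * ((S ω * (S ω)ᵀ) i k) := by
    intro r ω
    rw [hnorm, hquad, Finset.mul_sum]
    refine Finset.sum_congr rfl fun i _ => ?_
    rw [Finset.mul_sum]
    exact Finset.sum_congr rfl fun k _ => by ring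
  -- integral of a quadratic form in S Sᵀ
  have hint : ∀ (c : Fin m → Fin m → ℝ),
      ∫ ω, ∑ i, ∑ k, c i k * ((S ω * (S ω)ᵀ) i k) ∂P = ∑ i, ∑ k, c i k * E i k := by
    intro c
    rw [integral_finset_sum _ fun i _ => integrable_finset_sum _
      fun k _ => (hSint i k).const_mul _]
    refine Finset.sum_congr rfl fun i _ => ?_
    rw [integral_finset_sum _ fun k _ => (hSint i k).const_mul _]
    refine Finset.sum_congr rfl fun k _ => ?_
    rw [MeasureTheory.integral_const_mul, hE]
  -- the value of f
  have hfval : ∀ x, f x = (1/2 : ℝ) *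
      ((A.mulVec x - b) ⬝ᵥ E.mulVec (A.mulVec x - b)) := by
    intro x
    set r := A.mulVec x - b with hr
    rw [hf x]
    calc ∫ ω, (1/2 : ℝ) * (((S ω)ᵀ.mulVec r) ⬝ᵥ ((S ω)ᵀ.mulVec r)) ∂P
        = ∫ ω, ∑ i, ∑ k, ((1/2 : ℝ) * (r i * r k)) * ((S ω * (S ω)ᵀ) i k) ∂P :=
          integral_congr_ae (Filter.Eventually.of_forall fun ω => hpt r ω)
      _ = ∑ i, ∑ k, ((1/2 : ℝ) * (r i * r k)) * E i k := hint _
      _ = (1/2 : ℝ) * (r ⬝ᵥ E.mulVec r) := by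
          rw [hquad, Finset.mul_sum]
          refine Finset.sum_congr rfl fun i _ => ?_
          rw [Finset.mul_sum]
          exact Finset.sum_congr rfl fun k _ => by ring
  -- nonnegativity of f
  have hfnn : ∀ x, 0 ≤ f x := by
    intro x
    rw [hf x]
    refine integral_nonneg fun ω => ?_
    have : 0 ≤ ((S ω)ᵀ.mulVec (A.mulVec x - b)) ⬝ᵥ ((S ω)ᵀ.mulVec (A.mulVec x - b)) :=
      Finset.sum_nonneg fun j _ => mul_self_nonneg _
    positivity
  have hfx₀ : f x₀ = 0 := by rw [hfval, hx₀]; simp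
  -- E is PosSemidef
  have hEpsd : E.PosSemidef := by
    rw [Matrix.posSemidef_iff_dotProduct_mulVec]
    constructor
    · ext i j
      simp only [conjTranspose_apply, star_trivial, hE]
      refine integral_congr_ae (Filter.Eventually.of_forall fun ω => ?_)
      simp only [Matrix.mul_apply, transpose_apply]
      exact Finset.sum_congr rfl fun k _ => mul_comm _ _
    · intro v
      simp only [star_trivial]
      have hv : v ⬝ᵥ E.mulVec v = ∫ ω, ∑ i, ∑ k, (v i * v k) * ((S ω * (S ω)ᵀ) i k) ∂P := by
        rw [hquad, hint]
      rw [hv]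
      refine integral_nonneg fun ω => ?_
      rw [← hquad, ← hnorm]
      exact Finset.sum_nonneg fun j _ => mul_self_nonneg _
  set M := Aᵀ * E * A with hM
  have hMpsd : M.PosSemidef := by
    have := hEpsd.conjTranspose_mul_mul_same A
    simpa using this
  -- f in terms of M
  have hfM : ∀ v : Fin n → ℝ, f (x₀ + v) = (1/2 : ℝ) * (v ⬝ᵥ M.mulVec v) := by
    intro v
    rw [hfval]
    have h1 : A.mulVec (x₀ + v) - b = A.mulVec v := by
      rw [Matrix.mulVec_add, hx₀]; abel
    rw [h1, hM]
    congr 1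
    conv_rhs => rw [← Matrix.mulVec_mulVec, ← Matrix.mulVec_mulVec, hAdj,
      Matrix.transpose_transpose]
  -- minimizer iff f = 0
  have hmin : ∀ x, (∀ y, f x ≤ f y) ↔ f x = 0 := fun x =>
    ⟨fun h => le_antisymm (hfx₀ ▸ h x₀) (hfnn x), fun h y => h ▸ hfnn y⟩
  -- f = 0 iff M v = 0
  have hzero : ∀ v : Fin n → ℝ, f (x₀ + v) = 0 ↔ M.mulVec v = 0 := by
    intro v
    rw [hfM]
    constructor
    · intro h
      have h' : v ⬝ᵥ M.mulVec v = 0 := by linarith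
      have := (hMpsd.dotProduct_mulVec_zero_iff v).mp
      simpa using this (by simpa using h')
    · intro h; rw [h]; simp
  constructor
  · intro hset
    ext v
    simp only [LinearMap.mem_ker, Matrix.mulVecLin_apply, ← hM]
    constructor
    · intro hv
      have h1 : ∀ y, f (x₀ + v) ≤ f y := (hmin _).mpr ((hzero v).mpr hv)
      have h2 : A.mulVec (x₀ + v) = b := (Set.ext_iff.mp hset (x₀ + v)).mp h1
      rw [Matrix.mulVec_add, hx₀] at h2
      exact add_eq_left.mp h2
    · intro hv
      have h2 : A.mulVec (x₀ + v) = b := by rw [Matrix.mulVec_add, hx₀, hv, add_zero]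
      have h1 := (Set.ext_iff.mp hset (x₀ + v)).mpr h2
      exact (hzero v).mp ((hmin _).mp h1)
  · intro hker
    have hk : ∀ v, M.mulVec v = 0 ↔ A.mulVec v = 0 := fun v => by
      have := SetLike.ext_iff.mp hker v
      simpa [Matrix.mulVecLin_apply, ← hM] using this
    ext x
    have hx : x₀ + (x - x₀) = x := by abel
    simp only [Set.mem_setOf_eq]
    rw [hmin]
    have h1 := hzero (x - x₀)
    rw [hx] at h1
    rw [h1, hk, Matrix.mulVec_sub, hx₀, sub_eq_zero]
end

section
/- Let A ∈ ℝ^{m×n} and b ∈ ℝ^m be such that the linear system Ax = b is consistent. Let S be a measurable random m×q real matrix on a probability space (Ω, 𝓕, P) such that ω ↦ S(ω)S(ω)ᵀ is Bochner integrable, and define f : ℝⁿ → ℝ by f(x) := E[(1/2)‖S(ω)ᵀ(Ax − b)‖₂²]. If the matrix E[SSᵀ] is positive definite, then the set of global minimizers of f equals the solution set {x ∈ ℝⁿ : Ax = b}. -/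
open Matrix MeasureTheory

lemma integral_quad_aux {m : ℕ} {Ω : Type*} [MeasurableSpace Ω] (P : Measure Ω)
    (M : Ω → Matrix (Fin m) (Fin m) ℝ)
    (hMint : ∀ i j, Integrable (fun ω => M ω i j) P)
    (E : Matrix (Fin m) (Fin m) ℝ)
    (hE : ∀ i j, E i j = ∫ ω, M ω i j ∂P) (u : Fin m → ℝ) :
    ∫ ω, u ⬝ᵥ (M ω) *ᵥ u ∂P = u ⬝ᵥ E *ᵥ u := by
  have h : ∀ ω, u ⬝ᵥ (M ω) *ᵥ u = ∑ i, ∑ j, u i * (M ω i j * u j) := by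
    intro ω; simp [dotProduct, mulVec, Finset.mul_sum]
  simp only [h]
  rw [integral_finset_sum _ (fun i _ =>
    integrable_finset_sum _ fun j _ => ((hMint i j).mul_const _).const_mul _)]
  refine Finset.sum_congr rfl fun i _ => ?_
  rw [integral_finset_sum _ (fun j _ => ((hMint i j).mul_const _).const_mul _)]
  simp only [integral_const_mul, integral_mul_const, ← hE]
  simp [dotProduct, mulVec, Finset.mul_sum]

/-- Lemma 2.2: for a consistent linear system `A x = b`, if `E[S Sᵀ]` is positive
definite, then the set of global minimizers of `f(x) = E[(1/2)‖Sᵀ(Ax − b)‖₂²]`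
equals the solution set of `A x = b`. -/
theorem minimizers_eq_solutions_of_posDef
    {m n q : ℕ} (A : Matrix (Fin m) (Fin n) ℝ) (b : Fin m → ℝ)
    (hcons : ∃ x : Fin n → ℝ, A.mulVec x = b)
    {Ω : Type*} [MeasurableSpace Ω] (P : Measure Ω) [IsProbabilityMeasure P]
    (S : Ω → Matrix (Fin m) (Fin q) ℝ)
    (hSmeas : ∀ i j, Measurable fun ω => S ω i j)
    (hSint : ∀ i j, Integrable (fun ω => (S ω * (S ω)ᵀ) i j) P)
    (E : Matrix (Fin m) (Fin m) ℝ)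
    (hE : ∀ i j, E i j = ∫ ω, (S ω * (S ω)ᵀ) i j ∂P)
    (hEpd : E.PosDef)
    (f : (Fin n → ℝ) → ℝ)
    (hf : ∀ x, f x = ∫ ω, (1 / 2) *
      (((S ω)ᵀ.mulVec (A.mulVec x - b)) ⬝ᵥ ((S ω)ᵀ.mulVec (A.mulVec x - b))) ∂P) :
    {x : Fin n → ℝ | ∀ y, f x ≤ f y} = {x : Fin n → ℝ | A.mulVec x = b} := by
  -- closed form for f
  have hquad : ∀ x, f x = (1 / 2) *
      ((A.mulVec x - b) ⬝ᵥ E *ᵥ (A.mulVec x - b)) := by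
    intro x
    set u := A.mulVec x - b with hu
    have hpt : ∀ ω : Ω, (1 / 2 : ℝ) * (((S ω)ᵀ *ᵥ u) ⬝ᵥ ((S ω)ᵀ *ᵥ u)) =
        (1 / 2 : ℝ) * (u ⬝ᵥ (S ω * (S ω)ᵀ) *ᵥ u) := by
      intro ω
      congr 1
      rw [← mulVec_mulVec, dotProduct_mulVec, mulVec_transpose, vecMul_transpose,
        dotProduct_comm, dotProduct_mulVec]
    rw [hf x]
    simp only [← hu, hpt]
    rw [integral_const_mul, integral_quad_aux P _ hSint E hE]
  -- nonnegativity of f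
  have hnonneg : ∀ x, 0 ≤ f x := by
    intro x
    rw [hquad]
    have := hEpd.posSemidef.dotProduct_mulVec_nonneg (A.mulVec x - b)
    simp only [star_trivial] at this
    positivity
  -- f x = 0 iff Ax = b
  have hzero : ∀ x, f x = 0 ↔ A.mulVec x = b := by
    intro x
    constructor
    · intro h
      by_contra hne
      have hu : A.mulVec x - b ≠ 0 := sub_ne_zero.mpr hne
      have := hEpd.dotProduct_mulVec_pos (x := A.mulVec x - b) hu
      simp only [star_trivial] at this
      rw [hquad] at h
      nlinarith
    · intro h
      rw [hquad, h]
      simp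
  obtain ⟨x₀, hx₀⟩ := hcons
  have hfx₀ : f x₀ = 0 := (hzero x₀).mpr hx₀
  ext x
  simp only [Set.mem_setOf_eq]
  constructor
  · intro hmin
    have h1 : f x ≤ 0 := hfx₀ ▸ hmin x₀
    exact (hzero x).mp (le_antisymm h1 (hnonneg x))
  · intro hx y
    rw [(hzero x).mpr hx]
    exact hnonneg y
end

section
/- Let A ∈ ℝ^{m×n} and b ∈ ℝ^m be such that the linear system Ax = b is consistent. Then for any matrix S ∈ ℝ^{m×q} and any vector x̃ ∈ ℝⁿ, it holds that AᵀSSᵀ(Ax̃ − b) ≠ 0 if and only if Sᵀ(Ax̃ − b) ≠ 0. -/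
open Matrix

/-- Lemma 2.3: if `A x = b` is consistent, then for any `S` and `x̃`,
`Aᵀ S Sᵀ (A x̃ − b) ≠ 0` iff `Sᵀ (A x̃ − b) ≠ 0`. -/
theorem grad_ne_zero_iff_sres_ne_zero
    {m n q : ℕ} (A : Matrix (Fin m) (Fin n) ℝ) (b : Fin m → ℝ)
    (hcons : ∃ x : Fin n → ℝ, A.mulVec x = b)
    (S : Matrix (Fin m) (Fin q) ℝ) (xt : Fin n → ℝ) :
    Aᵀ.mulVec (S.mulVec (Sᵀ.mulVec (A.mulVec xt - b))) ≠ 0 ↔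
      Sᵀ.mulVec (A.mulVec xt - b) ≠ 0 := by
  obtain ⟨x, hx⟩ := hcons
  set r := A.mulVec xt - b with hr
  set y := Sᵀ.mulVec r with hy
  constructor
  · intro h hy0
    apply h
    rw [hy0, Matrix.mulVec_zero, Matrix.mulVec_zero]
  · intro hy0 h
    apply hy0
    have hrz : r = A.mulVec (xt - x) := by
      rw [hr, ← hx, Matrix.mulVec_sub]
    have h0 : (xt - x) ⬝ᵥ Aᵀ.mulVec (S.mulVec y) = 0 := by
      rw [h, dotProduct_zero]
    rw [Matrix.dotProduct_mulVec, Matrix.vecMul_transpose, ← hrz,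
      Matrix.dotProduct_mulVec, ← Matrix.mulVec_transpose, ← hy] at h0
    exact dotProduct_self_eq_zero.mp h0
end

section
/- Let A ∈ ℝ^{m×n}, b ∈ ℝ^m, and let S be a measurable random m×q real matrix on a probability space (Ω, 𝓕, P) such that ω ↦ S(ω)S(ω)ᵀ is Bochner integrable and D := E[SSᵀ] is positive definite. Then for a fixed x ∈ ℝⁿ, one has S(ω)ᵀ(Ax − b) = 0 for P-almost every ω if and only if Ax = b. -/
open Matrix MeasureTheory

/-- Lemma 2.4: if `D = E[S Sᵀ]` is positive definite, then for a fixed `x`,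
`S(ω)ᵀ (A x − b) = 0` for `P`-almost every `ω` iff `A x = b`. -/
theorem ae_sres_eq_zero_iff_solution
    {m n q : ℕ} (A : Matrix (Fin m) (Fin n) ℝ) (b : Fin m → ℝ)
    {Ω : Type*} [MeasurableSpace Ω] (P : Measure Ω) [IsProbabilityMeasure P]
    (S : Ω → Matrix (Fin m) (Fin q) ℝ)
    (hSmeas : ∀ i j, Measurable fun ω => S ω i j)
    (hSint : ∀ i j, Integrable (fun ω => (S ω * (S ω)ᵀ) i j) P)
    (D : Matrix (Fin m) (Fin m) ℝ)
    (hD : ∀ i j, D i j = ∫ ω, (S ω * (S ω)ᵀ) i j ∂P)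
    (hDpd : D.PosDef)
    (x : Fin n → ℝ) :
    (∀ᵐ ω ∂P, (S ω)ᵀ.mulVec (A.mulVec x - b) = 0) ↔ A.mulVec x = b := by
  set r : Fin m → ℝ := A.mulVec x - b with hr
  constructor
  · intro hae
    have expand : ∀ (M : Matrix (Fin m) (Fin m) ℝ),
        r ⬝ᵥ M.mulVec r = ∑ i, ∑ j, (r i * r j) * M i j := by
      intro M
      simp only [dotProduct, mulVec, Finset.mul_sum]
      exact Finset.sum_congr rfl fun i _ => Finset.sum_congr rfl fun j _ => by ring
    have key : ∫ ω, r ⬝ᵥ ((S ω * (S ω)ᵀ).mulVec r) ∂P = r ⬝ᵥ D.mulVec r := by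
      simp_rw [expand]
      rw [integral_finset_sum]
      · refine Finset.sum_congr rfl fun i _ => ?_
        rw [integral_finset_sum]
        · exact Finset.sum_congr rfl fun j _ => by rw [integral_const_mul, hD i j]
        · exact fun j _ => (hSint i j).const_mul _
      · exact fun i _ => integrable_finset_sum _ fun j _ => (hSint i j).const_mul _
    have hzero : ∫ ω, r ⬝ᵥ ((S ω * (S ω)ᵀ).mulVec r) ∂P = 0 := by
      refine integral_eq_zero_of_ae ?_
      filter_upwards [hae] with ω hω
      simp [← Matrix.mulVec_mulVec, hω]
    have hDr : r ⬝ᵥ D.mulVec r = 0 := by rw [← key, hzero]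
    by_contra hne
    have hrne : r ≠ 0 := by
      intro h
      exact hne (by rwa [hr, sub_eq_zero] at h)
    have := hDpd.dotProduct_mulVec_pos hrne
    simp only [RCLike.re_to_real, star_trivial] at this
    rw [hDr] at this
    exact lt_irrefl 0 this
  · intro h
    filter_upwards with ω
    rw [hr, h, sub_self, Matrix.mulVec_zero]
end

section
/- Let S be a measurable random m×q real matrix on a probability space (Ω, 𝓕, P) such that ω ↦ S(ω)S(ω)ᵀ is Bochner integrable and D := E[SSᵀ] is positive definite. Define g : Ω → ℝ^{m×m} by g(ω) := S(ω)S(ω)ᵀ / ‖S(ω)‖₂² when S(ω) ≠ 0 and g(ω) := 0 when S(ω) = 0, where ‖S(ω)‖₂ is the spectral (operator) norm of S(ω). Then g is Bochner integrable and the matrix E[g] = ∫ g(ω) dP(ω) is positive definite. -/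
open Matrix MeasureTheory
open scoped Classical

/-- The spectral (operator 2-)norm of a real matrix, i.e. the operator norm of the
induced linear map between Euclidean spaces. -/
noncomputable def specNorm {m q : ℕ} (M : Matrix (Fin m) (Fin q) ℝ) : ℝ :=
  ‖LinearMap.toContinuousLinearMap (Matrix.toEuclideanLin M)‖

lemma euclid_abs_le_norm {n : ℕ} (v : EuclideanSpace ℝ (Fin n)) (i : Fin n) : |v i| ≤ ‖v‖ := by
  rw [EuclideanSpace.norm_eq]
  have h1 : |v i| = Real.sqrt (‖v i‖ ^ 2) := by
    rw [Real.sqrt_sq_eq_abs]; simp [Real.norm_eq_abs, abs_abs]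
  rw [h1]
  apply Real.sqrt_le_sqrt
  exact Finset.single_le_sum (f := fun k => ‖v k‖ ^ 2) (fun k _ => sq_nonneg _) (Finset.mem_univ i)

lemma abs_entry_le_specNorm {m q : ℕ} (M : Matrix (Fin m) (Fin q) ℝ) (i : Fin m) (j : Fin q) :
    |M i j| ≤ specNorm M := by
  have h := (LinearMap.toContinuousLinearMap (Matrix.toEuclideanLin M)).le_opNorm
      (EuclideanSpace.single j (1:ℝ))
  rw [EuclideanSpace.norm_single] at h
  simp only [norm_one, mul_one] at h
  refine le_trans ?_ h
  have hv : (Matrix.toEuclideanLin M (EuclideanSpace.single j (1:ℝ))) i = M i j := by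
    simp [Matrix.toEuclideanLin_apply, Matrix.mulVec,
      dotProduct, EuclideanSpace.single_apply]
  have h2 := euclid_abs_le_norm (Matrix.toEuclideanLin M (EuclideanSpace.single j (1:ℝ))) i
  rw [hv] at h2
  simpa using h2

lemma specNorm_pos {m q : ℕ} {M : Matrix (Fin m) (Fin q) ℝ} (h : M ≠ 0) : 0 < specNorm M := by
  rcases (norm_nonneg (LinearMap.toContinuousLinearMap (Matrix.toEuclideanLin M))).lt_or_eq
    with h1 | h1
  · exact h1
  · exfalso; apply h
    have h2 : LinearMap.toContinuousLinearMap (Matrix.toEuclideanLin M) = 0 := by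
      rw [← norm_eq_zero]; exact h1.symm
    have h3 : Matrix.toEuclideanLin M = 0 := (LinearEquiv.map_eq_zero_iff _).mp h2
    exact (LinearEquiv.map_eq_zero_iff _).mp h3

lemma continuous_specNorm {m q : ℕ} : Continuous (specNorm (m := m) (q := q)) := by
  have hlin : IsLinearMap ℝ (fun M : Matrix (Fin m) (Fin q) ℝ =>
      (LinearMap.toContinuousLinearMap (Matrix.toEuclideanLin M) :
        EuclideanSpace ℝ (Fin q) →L[ℝ] EuclideanSpace ℝ (Fin m))) :=
    ⟨fun a b => by simp, fun c a => by simp⟩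
  have h : Continuous (fun M : Matrix (Fin m) (Fin q) ℝ =>
      (LinearMap.toContinuousLinearMap (Matrix.toEuclideanLin M) :
        EuclideanSpace ℝ (Fin q) →L[ℝ] EuclideanSpace ℝ (Fin m))) :=
    (hlin.mk' _).continuous_of_finiteDimensional
  exact continuous_norm.comp h

section quad
variable {m : ℕ} {Ω : Type*} [MeasurableSpace Ω] (P : Measure Ω)

lemma quad_expand (M : Matrix (Fin m) (Fin m) ℝ) (x : Fin m → ℝ) :
    x ⬝ᵥ (M *ᵥ x) = ∑ i, ∑ j, x i * M i j * x j := by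
  simp [dotProduct, Matrix.mulVec, Finset.mul_sum, mul_assoc]

lemma quad_int (f : Ω → Matrix (Fin m) (Fin m) ℝ)
    (hf : ∀ i j, Integrable (fun ω => f ω i j) P) (x : Fin m → ℝ) :
    Integrable (fun ω => x ⬝ᵥ (f ω *ᵥ x)) P := by
  have h : (fun ω => x ⬝ᵥ (f ω *ᵥ x)) = fun ω => ∑ i, ∑ j, x i * f ω i j * x j := by
    funext ω; exact quad_expand _ _
  rw [h]
  exact integrable_finset_sum _ fun i _ => integrable_finset_sum _ fun j _ =>
    ((hf i j).const_mul (x i)).mul_const (x j)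

lemma quad_integral (f : Ω → Matrix (Fin m) (Fin m) ℝ)
    (hf : ∀ i j, Integrable (fun ω => f ω i j) P) (x : Fin m → ℝ) :
    ∫ ω, x ⬝ᵥ (f ω *ᵥ x) ∂P = x ⬝ᵥ ((Matrix.of fun i j => ∫ ω, f ω i j ∂P) *ᵥ x) := by
  have h1 : (fun ω => x ⬝ᵥ (f ω *ᵥ x)) = fun ω => ∑ i, ∑ j, x i * f ω i j * x j := by
    funext ω; exact quad_expand _ _
  rw [h1, quad_expand]
  rw [integral_finset_sum _ fun i _ => integrable_finset_sum _ fun j _ =>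
    ((hf i j).const_mul (x i)).mul_const (x j)]
  refine Finset.sum_congr rfl fun i _ => ?_
  rw [integral_finset_sum _ fun j _ => ((hf i j).const_mul (x i)).mul_const (x j)]
  refine Finset.sum_congr rfl fun j _ => ?_
  rw [integral_mul_const, integral_const_mul]
  rfl

end quad

/-- Lemma 2.5: if `D = E[S Sᵀ]` is positive definite, then
`g(ω) = S(ω)S(ω)ᵀ/‖S(ω)‖₂²` (with the convention `0/0 = 0`) is Bochner integrable
and `E[g]` is positive definite. -/
theorem normalized_second_moment_posDef
    {m q : ℕ}
    {Ω : Type*} [MeasurableSpace Ω] (P : Measure Ω) [IsProbabilityMeasure P]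
    (S : Ω → Matrix (Fin m) (Fin q) ℝ)
    (hSmeas : ∀ i j, Measurable fun ω => S ω i j)
    (hSint : ∀ i j, Integrable (fun ω => (S ω * (S ω)ᵀ) i j) P)
    (D : Matrix (Fin m) (Fin m) ℝ)
    (hD : ∀ i j, D i j = ∫ ω, (S ω * (S ω)ᵀ) i j ∂P)
    (hDpd : D.PosDef)
    (g : Ω → Matrix (Fin m) (Fin m) ℝ)
    (hg : ∀ ω, g ω = if S ω = 0 then 0 else (specNorm (S ω) ^ 2)⁻¹ • (S ω * (S ω)ᵀ)) :
    (∀ i j, Integrable (fun ω => g ω i j) P) ∧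
      (Matrix.of fun i j => ∫ ω, g ω i j ∂P).PosDef := by
  -- measurability infrastructure
  have hSfun : Measurable (fun ω => (fun i j => S ω i j : Fin m → Fin q → ℝ)) :=
    measurable_pi_lambda _ fun i => measurable_pi_lambda _ fun j => hSmeas i j
  have hofc : Continuous (fun f : Fin m → Fin q → ℝ => specNorm (Matrix.of f)) :=
    continuous_specNorm.comp continuous_id
  have hspec : Measurable (fun ω => specNorm (S ω)) := hofc.measurable.comp hSfun
  have hzero : MeasurableSet {ω | S ω = 0} := by
    have h : {ω | S ω = 0} = ⋂ i, ⋂ j, {ω | S ω i j = 0} := by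
      ext ω
      simp only [Set.mem_setOf_eq, Set.mem_iInter, ← Matrix.ext_iff, Matrix.zero_apply]
    rw [h]
    exact MeasurableSet.iInter fun i => MeasurableSet.iInter fun j =>
      measurableSet_eq_fun (hSmeas i j) measurable_const
  have hmul : ∀ i j, Measurable fun ω => (S ω * (S ω)ᵀ) i j := fun i j => by
    simp only [Matrix.mul_apply, Matrix.transpose_apply]
    exact Finset.measurable_sum _ fun k _ => (hSmeas i k).mul (hSmeas j k)
  -- entrywise description of g
  have hgeq : ∀ i j, (fun ω => g ω i j) =
      fun ω => if S ω = 0 then 0 else (specNorm (S ω) ^ 2)⁻¹ * ((S ω * (S ω)ᵀ) i j) := by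
    intro i j; funext ω; rw [hg]
    by_cases hs : S ω = 0 <;> simp [hs]
  have hgmeas : ∀ i j, Measurable (fun ω => g ω i j) := by
    intro i j
    rw [hgeq]
    exact Measurable.ite hzero measurable_const (((hspec.pow_const 2).inv).mul (hmul i j))
  -- uniform bound on the entries of g
  have hbound : ∀ i j ω, |g ω i j| ≤ (q : ℝ) := by
    intro i j ω
    rw [hg]
    by_cases hs : S ω = 0
    · simp [hs]
    · simp only [hs, if_false, Matrix.smul_apply, smul_eq_mul]
      have hsp := specNorm_pos hs
      have hsp2 : (0:ℝ) < specNorm (S ω) ^ 2 := pow_pos hsp 2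
      have h1 : |(S ω * (S ω)ᵀ) i j| ≤ (q : ℝ) * specNorm (S ω) ^ 2 := by
        rw [Matrix.mul_apply]
        calc |∑ k, S ω i k * (S ω)ᵀ k j| ≤ ∑ k, |S ω i k * (S ω)ᵀ k j| :=
              Finset.abs_sum_le_sum_abs _ _
          _ ≤ ∑ _k : Fin q, specNorm (S ω) * specNorm (S ω) := by
              refine Finset.sum_le_sum fun k _ => ?_
              rw [abs_mul, Matrix.transpose_apply]
              exact mul_le_mul (abs_entry_le_specNorm _ _ _) (abs_entry_le_specNorm _ _ _)
                (abs_nonneg _) hsp.le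
          _ = (q : ℝ) * specNorm (S ω) ^ 2 := by simp [sq]
      calc |(specNorm (S ω) ^ 2)⁻¹ * (S ω * (S ω)ᵀ) i j|
          = (specNorm (S ω) ^ 2)⁻¹ * |(S ω * (S ω)ᵀ) i j| := by
            rw [abs_mul, abs_inv, abs_of_pos hsp2]
        _ ≤ (specNorm (S ω) ^ 2)⁻¹ * ((q : ℝ) * specNorm (S ω) ^ 2) := by
            exact mul_le_mul_of_nonneg_left h1 (inv_nonneg.mpr hsp2.le)
        _ = (q : ℝ) := by field_simp
  -- integrability of the entries of g
  have hgInt : ∀ i j, Integrable (fun ω => g ω i j) P := by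
    intro i j
    refine Integrable.mono' (integrable_const (q : ℝ)) (hgmeas i j).aestronglyMeasurable
      (ae_of_all _ fun ω => ?_)
    simpa [Real.norm_eq_abs] using hbound i j ω
  refine ⟨hgInt, Matrix.posDef_iff_dotProduct_mulVec.mpr ⟨?_, ?_⟩⟩
  -- Hermitian
  · have hsymm : ∀ ω i j, g ω j i = g ω i j := by
      intro ω i j
      rw [hg]
      by_cases hs : S ω = 0
      · simp [hs]
      · simp only [hs, if_false, Matrix.smul_apply, smul_eq_mul]
        congr 1
        rw [Matrix.mul_apply, Matrix.mul_apply]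
        simp only [Matrix.transpose_apply]
        exact Finset.sum_congr rfl fun k _ => mul_comm _ _
    ext i j
    simp only [Matrix.conjTranspose_apply, Matrix.of_apply, star_trivial]
    exact integral_congr_ae (ae_of_all _ fun ω => hsymm ω i j)
  -- positive definite quadratic form
  · intro x hx
    simp only [star_trivial]
    have hIq := quad_integral P g hgInt x
    have hFx := quad_int P g hgInt x
    -- nonnegativity of the quadratic form of S Sᵀ
    have hQ : ∀ ω, x ⬝ᵥ ((S ω * (S ω)ᵀ) *ᵥ x) = (x ᵥ* S ω) ⬝ᵥ (x ᵥ* S ω) := by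
      intro ω
      rw [← Matrix.mulVec_mulVec, Matrix.dotProduct_mulVec, Matrix.mulVec_transpose]
    have hQnonneg : ∀ ω, 0 ≤ x ⬝ᵥ ((S ω * (S ω)ᵀ) *ᵥ x) := by
      intro ω
      rw [hQ]
      exact Finset.sum_nonneg fun k _ => mul_self_nonneg _
    have hFnonneg : ∀ ω, 0 ≤ x ⬝ᵥ (g ω *ᵥ x) := by
      intro ω
      rw [hg]
      by_cases hs : S ω = 0
      · simp [hs]
      · have hsp2 : (0:ℝ) < specNorm (S ω) ^ 2 := pow_pos (specNorm_pos hs) 2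
        simp only [hs, if_false, Matrix.smul_mulVec, dotProduct_smul, smul_eq_mul]
        exact mul_nonneg (inv_nonneg.mpr hsp2.le) (hQnonneg ω)
    have hIpos : 0 < ∫ ω, x ⬝ᵥ (g ω *ᵥ x) ∂P := by
      rcases (integral_nonneg (f := fun ω => x ⬝ᵥ (g ω *ᵥ x)) hFnonneg).lt_or_eq with h | h
      · exact h
      · exfalso
        have hzeroae : (fun ω => x ⬝ᵥ (g ω *ᵥ x)) =ᵐ[P] 0 :=
          (integral_eq_zero_iff_of_nonneg hFnonneg hFx).mp h.symm
        have hQae : (fun ω => x ⬝ᵥ ((S ω * (S ω)ᵀ) *ᵥ x)) =ᵐ[P] 0 := by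
          filter_upwards [hzeroae] with ω hω
          simp only [Pi.zero_apply] at hω ⊢
          by_cases hs : S ω = 0
          · simp [hs]
          · have hsp2 : (0:ℝ) < specNorm (S ω) ^ 2 := pow_pos (specNorm_pos hs) 2
            have hgo : x ⬝ᵥ (g ω *ᵥ x) =
                (specNorm (S ω) ^ 2)⁻¹ * (x ⬝ᵥ ((S ω * (S ω)ᵀ) *ᵥ x)) := by
              rw [hg]
              simp [hs, Matrix.smul_mulVec, dotProduct_smul]
            rw [hgo] at hω
            rcases mul_eq_zero.mp hω with h' | h'
            · exact absurd h' (inv_ne_zero hsp2.ne')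
            · exact h'
        have hQint : ∫ ω, x ⬝ᵥ ((S ω * (S ω)ᵀ) *ᵥ x) ∂P = 0 :=
          integral_eq_zero_of_ae hQae
        have hDeq : (Matrix.of fun i j => ∫ ω, (S ω * (S ω)ᵀ) i j ∂P) = D := by
          ext i j; exact (hD i j).symm
        have hDI := quad_integral P _ hSint x
        rw [hDeq] at hDI
        have hDpos := hDpd.dotProduct_mulVec_pos hx
        simp only [star_trivial] at hDpos
        rw [hQint] at hDI
        exact absurd hDI.symm hDpos.ne'
    rw [hIq] at hIpos
    exact hIpos
end

section
/- Let A ∈ ℝ^{m×n}, b ∈ ℝ^m, and let z ∈ ℝⁿ satisfy Az = b. Let x ∈ ℝⁿ and S ∈ ℝ^{m×q} with Sᵀ(Ax − b) ≠ 0 (so that AᵀSSᵀ(Ax − b) ≠ 0), and let ζ ∈ (0, 2). Set L := ‖Sᵀ(Ax − b)‖₂² / ‖AᵀSSᵀ(Ax − b)‖₂² and x⁺ := x − (2 − ζ)·L·AᵀSSᵀ(Ax − b). Then ‖x⁺ − z‖₂² = ‖x − z‖₂² − ζ(2 − ζ)·L·‖Sᵀ(Ax − b)‖₂²; in particular ‖x⁺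 − z‖₂ < ‖x − z‖₂. -/
open Matrix

/-- The sketched residual `Sᵀ(Ax − b)`. -/
noncomputable def sres {m n q : ℕ} (A : Matrix (Fin m) (Fin n) ℝ) (b : Fin m → ℝ)
    (S : Matrix (Fin m) (Fin q) ℝ) (x : Fin n → ℝ) : Fin q → ℝ :=
  Sᵀ.mulVec (A.mulVec x - b)

/-- The stochastic gradient `∇f_S(x) = Aᵀ S Sᵀ (Ax − b)`. -/
noncomputable def sgrad {m n q : ℕ} (A : Matrix (Fin m) (Fin n) ℝ) (b : Fin m → ℝ)
    (S : Matrix (Fin m) (Fin q) ℝ) (x : Fin n → ℝ) : Fin n → ℝ :=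
  Aᵀ.mulVec (S.mulVec (Sᵀ.mulVec (A.mulVec x - b)))

private lemma dp_self_nonneg {k : ℕ} (v : Fin k → ℝ) : 0 ≤ v ⬝ᵥ v :=
  Finset.sum_nonneg fun i _ => mul_self_nonneg _

/-- One step of the basic method with the adaptive (Polyak-type) step-size:
the exact error decrease identity (3.5), and in particular strict decrease of the
error. Here `L = ‖Sᵀ(Ax−b)‖₂²/‖∇f_S(x)‖₂²`, `x⁺ = x − (2−ζ)L∇f_S(x)`, and `z`
is any solution of `A z = b`. -/
theorem basic_step_error_identity
    {m n q : ℕ} (A : Matrix (Fin m) (Fin n) ℝ) (b : Fin m → ℝ)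
    (z : Fin n → ℝ) (hz : A.mulVec z = b)
    (x : Fin n → ℝ) (S : Matrix (Fin m) (Fin q) ℝ)
    (hS : sres A b S x ≠ 0)
    (ζ : ℝ) (hζ : ζ ∈ Set.Ioo (0 : ℝ) 2)
    (L : ℝ)
    (hL : L = (sres A b S x ⬝ᵥ sres A b S x) / (sgrad A b S x ⬝ᵥ sgrad A b S x))
    (xp : Fin n → ℝ) (hxp : xp = x - ((2 - ζ) * L) • sgrad A b S x) :
    (xp - z) ⬝ᵥ (xp - z) =
        (x - z) ⬝ᵥ (x - z) - ζ * (2 - ζ) * L * (sres A b S x ⬝ᵥ sres A b S x) ∧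
      Real.sqrt ((xp - z) ⬝ᵥ (xp - z)) < Real.sqrt ((x - z) ⬝ᵥ (x - z)) := by
  obtain ⟨hζ0, hζ2⟩ := hζ
  set s := sres A b S x with hs
  set g := sgrad A b S x with hg
  have hr : A.mulVec (x - z) = A.mulVec x - b := by
    rw [Matrix.mulVec_sub, hz]
  -- key: g ⬝ᵥ (x - z) = s ⬝ᵥ s
  have key : g ⬝ᵥ (x - z) = s ⬝ᵥ s := by
    rw [hg, hs, sgrad, sres, ← hr]
    rw [Matrix.mulVec_transpose, ← Matrix.dotProduct_mulVec,
      ← Matrix.vecMul_transpose, Matrix.dotProduct_mulVec, ← Matrix.dotProduct_mulVec,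
      ← Matrix.dotProduct_mulVec]
  have hss : 0 < s ⬝ᵥ s := by
    rcases lt_or_eq_of_le (dp_self_nonneg s) with h | h
    · exact h
    · exact absurd ((dotProduct_self_eq_zero).mp h.symm) hS
  have hgne : g ≠ 0 := by
    intro h
    rw [h, zero_dotProduct] at key
    linarith
  have hgg : 0 < g ⬝ᵥ g := by
    rcases lt_or_eq_of_le (dp_self_nonneg g) with h | h
    · exact h
    · exact absurd ((dotProduct_self_eq_zero).mp h.symm) hgne
  have hLgg : L * (g ⬝ᵥ g) = s ⬝ᵥ s := by
    rw [hL]; field_simp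
  have hLpos : 0 < L := by
    rw [hL]; positivity
  have hexp : (xp - z) ⬝ᵥ (xp - z) =
      (x - z) ⬝ᵥ (x - z) - 2 * ((2 - ζ) * L) * (g ⬝ᵥ (x - z))
        + ((2 - ζ) * L)^2 * (g ⬝ᵥ g) := by
    have : xp - z = (x - z) - ((2 - ζ) * L) • g := by
      rw [hxp]; abel
    rw [this]
    simp only [sub_dotProduct, dotProduct_sub, smul_dotProduct,
      dotProduct_smul, smul_eq_mul]
    rw [dotProduct_comm x g, dotProduct_comm z g]; ring
  have hid : (xp - z) ⬝ᵥ (xp - z) =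
      (x - z) ⬝ᵥ (x - z) - ζ * (2 - ζ) * L * (s ⬝ᵥ s) := by
    rw [hexp, key]
    nlinarith [hLgg]
  refine ⟨hid, ?_⟩
  apply Real.sqrt_lt_sqrt (dp_self_nonneg _)
  rw [hid]
  nlinarith [mul_pos (mul_pos hζ0 (by linarith : (0:ℝ) < 2 - ζ)) (mul_pos hLpos hss)]
end

section
/- Let A ∈ ℝ^{m×n}, b ∈ ℝ^m with Ax = b consistent, and let x* be the unique solution of Ax = b lying in Range(Aᵀ). Let S be a measurable random m×q real matrix on a probability space (Ω, 𝓕, P) such that ω ↦ S(ω)S(ω)ᵀ is Bochner integrable, H := E[SSᵀ] is positive definite, and there is λ > 0 with λ_max(Aᵀ S(ω) S(ω)ᵀ A) ≤ λ for P-almost every ω. Let ζ ∈ (0, 2), let x ∈ Range(Aᵀ), and for each ω define x⁺(ω) := x if S(ω)ᵀ(Ax − b) = 0, and otherwise x⁺(ω) := x − (2 − ζ)·L(ω)·AᵀS(ω)S(ω)ᵀ(Ax − b) where L(ω) := ‖S(ω)ᵀ(Ax − b)‖₂² / ‖AᵀS(ω)S(ω)ᵀ(Ax − b)‖₂². Then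 ∫ ‖x⁺(ω) − x*‖₂² dP(ω) ≤ (1 − ζ(2 − ζ)·σ²/λ)·‖x − x*‖₂², where σ² := inf{‖H^{1/2}Av‖₂² : v ∈ Range(Aᵀ), ‖v‖₂ = 1} is the square of the smallest nonzero singular value of H^{1/2}A. -/
open Matrix MeasureTheory
open scoped Classical

/-- The square root of a positive semidefinite matrix, as `Matrix.PosSemidef.sqrt` was defined
in the older Mathlib (since removed). -/
noncomputable def Matrix.PosSemidef.sqrt {n : Type*} [Fintype n] [DecidableEq n] {𝕜 : Type*} [RCLike 𝕜]
    [PartialOrder 𝕜] {A : Matrix n n 𝕜} (hA : A.PosSemidef) : Matrix n n 𝕜 :=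
  hA.1.eigenvectorUnitary.1 * diagonal ((↑) ∘ (√·) ∘ hA.1.eigenvalues) *
    (star hA.1.eigenvectorUnitary : Matrix n n 𝕜)

/-!
Write `e = x − x*` and `M = Sᵀ A`, so that the sketched residual is `r = M e` and the
stochastic gradient is `g = Mᵀ r`. Since `⟨e, g⟩ = ‖r‖²`, the relaxed Polyak step decreases
the squared error by exactly `ζ (2 − ζ) ‖r‖⁴ / ‖g‖²`, and `‖g‖² ≤ λ ‖r‖²` turns this into at least
`ζ (2 − ζ) ‖r‖² / λ`. Taking expectations, `E ‖r‖² = (A e)ᵀ H (A e) = ‖H^{1/2} A e‖²`, which is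
at least `σ² ‖e‖²` because `e ∈ Range(Aᵀ)`.
-/

namespace Matrix

variable {ι κ : Type*} [Fintype ι] [Fintype κ]

lemma dotProduct_self_nonneg (v : ι → ℝ) : 0 ≤ v ⬝ᵥ v :=
  Finset.sum_nonneg fun i _ => mul_self_nonneg (v i)

lemma dotProduct_self_mul_dotProduct_self_le (u v : ι → ℝ) :
    (u ⬝ᵥ v) * (u ⬝ᵥ v) ≤ (u ⬝ᵥ u) * (v ⬝ᵥ v) := by
  simpa [dotProduct, pow_two] using Finset.sum_mul_sq_le_sq_mul_sq Finset.univ u v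

lemma dotProduct_mulVec_transpose_mul_self (M : Matrix κ ι ℝ) (y : ι → ℝ) :
    y ⬝ᵥ (Mᵀ * M) *ᵥ y = (M *ᵥ y) ⬝ᵥ (M *ᵥ y) := by
  rw [← mulVec_mulVec, dotProduct_mulVec, vecMul_transpose]

lemma dotProduct_transpose_mulVec_mulVec (M : Matrix κ ι ℝ) (e : ι → ℝ) :
    e ⬝ᵥ Mᵀ *ᵥ (M *ᵥ e) = (M *ᵥ e) ⬝ᵥ (M *ᵥ e) := by
  rw [mulVec_mulVec, dotProduct_mulVec_transpose_mul_self]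

lemma transpose_mulVec_dotProduct_self_le {M : Matrix κ ι ℝ} {lam : ℝ} (hlam : 0 ≤ lam)
    (hM : ∀ y, (M *ᵥ y) ⬝ᵥ (M *ᵥ y) ≤ lam * (y ⬝ᵥ y)) (r : κ → ℝ) :
    (Mᵀ *ᵥ r) ⬝ᵥ (Mᵀ *ᵥ r) ≤ lam * (r ⬝ᵥ r) := by
  set g := Mᵀ *ᵥ r
  have hgg : g ⬝ᵥ g = r ⬝ᵥ M *ᵥ g := by
    rw [← dotProduct_transpose_mulVec_mulVec Mᵀ r, transpose_transpose]
  rcases (dotProduct_self_nonneg g).eq_or_lt with hg0 | hgpos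
  · rw [← hg0]
    exact mul_nonneg hlam (dotProduct_self_nonneg r)
  · refine le_of_mul_le_mul_right ?_ hgpos
    calc (g ⬝ᵥ g) * (g ⬝ᵥ g) ≤ (r ⬝ᵥ r) * ((M *ᵥ g) ⬝ᵥ (M *ᵥ g)) := by
          rw [hgg]
          exact dotProduct_self_mul_dotProduct_self_le r (M *ᵥ g)
      _ ≤ (r ⬝ᵥ r) * (lam * (g ⬝ᵥ g)) := by gcongr; exacts [dotProduct_self_nonneg r, hM g]
      _ = lam * (r ⬝ᵥ r) * (g ⬝ᵥ g) := by ring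

lemma dotProduct_mulVec_eq_sum (M : Matrix ι ι ℝ) (u : ι → ℝ) :
    u ⬝ᵥ M *ᵥ u = ∑ i, ∑ j, u i * u j * M i j := by
  simp [← toLinearMap₂'_apply', toLinearMap₂'_apply, mul_assoc]

end Matrix

section RelaxedPolyakStep

variable {ι κ : Type*} [Fintype ι] [Fintype κ]

/-- A gradient step on `e ↦ ‖M e‖² / 2` with a relaxed Polyak step size. At `M e = 0` it is `e`
despite the `0 / 0`, because the gradient `Mᵀ M e` vanishes too. -/
noncomputable def relaxedPolyakStep (M : Matrix κ ι ℝ) (ζ : ℝ) (e : ι → ℝ) : ι → ℝ :=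
  e - ((2 - ζ) * ((M *ᵥ e) ⬝ᵥ (M *ᵥ e) / ((Mᵀ *ᵥ (M *ᵥ e)) ⬝ᵥ (Mᵀ *ᵥ (M *ᵥ e))))) •
    (Mᵀ *ᵥ (M *ᵥ e))

lemma relaxedPolyakStep_dotProduct_self_eq (M : Matrix κ ι ℝ) (ζ : ℝ) (e : ι → ℝ) :
    relaxedPolyakStep M ζ e ⬝ᵥ relaxedPolyakStep M ζ e =
      e ⬝ᵥ e - ζ * (2 - ζ) *
        (((M *ᵥ e) ⬝ᵥ (M *ᵥ e)) ^ 2 / ((Mᵀ *ᵥ (M *ᵥ e)) ⬝ᵥ (Mᵀ *ᵥ (M *ᵥ e)))) := by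
  have heg := dotProduct_transpose_mulVec_mulVec M e
  unfold relaxedPolyakStep
  generalize Mᵀ *ᵥ (M *ᵥ e) = g at heg ⊢
  generalize (M *ᵥ e) ⬝ᵥ (M *ᵥ e) = ρ at heg ⊢
  rcases eq_or_ne (g ⬝ᵥ g) 0 with hg0 | hg0
  · simp [dotProduct_self_eq_zero.mp hg0]
  · simp only [sub_dotProduct, dotProduct_sub, smul_dotProduct, dotProduct_smul, smul_eq_mul,
      dotProduct_comm g e, heg]
    field_simp
    ring

lemma relaxedPolyakStep_dotProduct_self_le {M : Matrix κ ι ℝ} {lam ζ : ℝ} (hlam : 0 < lam)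
    (hM : ∀ y, (M *ᵥ y) ⬝ᵥ (M *ᵥ y) ≤ lam * (y ⬝ᵥ y)) (hζ : ζ ∈ Set.Icc 0 2) (e : ι → ℝ) :
    relaxedPolyakStep M ζ e ⬝ᵥ relaxedPolyakStep M ζ e ≤
      e ⬝ᵥ e - ζ * (2 - ζ) / lam * ((M *ᵥ e) ⬝ᵥ (M *ᵥ e)) := by
  have heg := dotProduct_transpose_mulVec_mulVec M e
  have hgg := transpose_mulVec_dotProduct_self_le hlam.le hM (M *ᵥ e)
  rw [relaxedPolyakStep_dotProduct_self_eq]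
  set ρ := (M *ᵥ e) ⬝ᵥ (M *ᵥ e)
  set g := Mᵀ *ᵥ (M *ᵥ e)
  have hdecrease : ρ / lam ≤ ρ ^ 2 / (g ⬝ᵥ g) := by
    rcases (dotProduct_self_nonneg g).eq_or_lt with hg0 | hgpos
    · simp [← heg, dotProduct_self_eq_zero.mp hg0.symm]
    · rw [div_le_div_iff₀ hlam hgpos]
      nlinarith [dotProduct_self_nonneg (M *ᵥ e)]
  have hζ' : 0 ≤ ζ * (2 - ζ) := mul_nonneg hζ.1 (by linarith [hζ.2])
  calc e ⬝ᵥ e - ζ * (2 - ζ) * (ρ ^ 2 / (g ⬝ᵥ g)) ≤ e ⬝ᵥ e - ζ * (2 - ζ) * (ρ / lam) := by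
        gcongr
    _ = e ⬝ᵥ e - ζ * (2 - ζ) / lam * ρ := by ring

end RelaxedPolyakStep

namespace Matrix.PosSemidef

variable {ι : Type*} [Fintype ι] [DecidableEq ι] {H : Matrix ι ι ℝ}

lemma sqrt_mul_sqrt (hH : H.PosSemidef) : hH.sqrt * hH.sqrt = H := by
  set U := hH.1.eigenvectorUnitary
  set D : Matrix ι ι ℝ := diagonal (RCLike.ofReal ∘ (√·) ∘ hH.1.eigenvalues)
  have hUU : star (U : Matrix ι ι ℝ) * U = 1 := Unitary.star_mul_self_of_mem U.2
  have hDD : D * D = diagonal (RCLike.ofReal ∘ hH.1.eigenvalues) := by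
    rw [diagonal_mul_diagonal]
    congr 1
    funext i
    simp [Real.mul_self_sqrt (hH.eigenvalues_nonneg i)]
  conv_rhs => rw [hH.1.spectral_theorem, Unitary.conjStarAlgAut_apply]
  calc hH.sqrt * hH.sqrt
        = U * D * (star (U : Matrix ι ι ℝ) * U) * D * star (U : Matrix ι ι ℝ) := by
        simp only [sqrt, U, D, Matrix.mul_assoc]
    _ = _ := by rw [hUU, Matrix.mul_one, Matrix.mul_assoc (U : Matrix ι ι ℝ), hDD]

lemma transpose_sqrt (hH : H.PosSemidef) : (hH.sqrt)ᵀ = hH.sqrt := by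
  rw [← conjTranspose_eq_transpose_of_trivial]
  simp [sqrt, star_eq_conjTranspose, Matrix.mul_assoc]

lemma sqrt_mulVec_dotProduct_self (hH : H.PosSemidef) (u : ι → ℝ) :
    (hH.sqrt *ᵥ u) ⬝ᵥ (hH.sqrt *ᵥ u) = u ⬝ᵥ H *ᵥ u := by
  rw [← dotProduct_mulVec_transpose_mul_self, transpose_sqrt, sqrt_mul_sqrt]

end Matrix.PosSemidef

lemma sInf_mul_dotProduct_self_le_of_smul_mem {ι κ : Type*} [Fintype ι] [Fintype κ]
    (C : Matrix κ ι ℝ) {V : Set (ι → ℝ)} (hV : ∀ (c : ℝ) v, v ∈ V → c • v ∈ V) {e : ι → ℝ}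
    (he : e ∈ V) :
    sInf {r : ℝ | ∃ v, v ∈ V ∧ v ⬝ᵥ v = 1 ∧ r = (C *ᵥ v) ⬝ᵥ (C *ᵥ v)} * (e ⬝ᵥ e) ≤
      (C *ᵥ e) ⬝ᵥ (C *ᵥ e) := by
  rcases eq_or_ne e 0 with rfl | he0
  · simp
  have hee : 0 < e ⬝ᵥ e := (dotProduct_self_nonneg e).lt_of_ne' (by simpa using he0)
  set c := (√(e ⬝ᵥ e))⁻¹
  have hc : c ^ 2 * (e ⬝ᵥ e) = 1 := by
    rw [inv_pow, Real.sq_sqrt hee.le, inv_mul_cancel₀ hee.ne']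
  have hmem : c ^ 2 * ((C *ᵥ e) ⬝ᵥ (C *ᵥ e)) ∈
      {r : ℝ | ∃ v, v ∈ V ∧ v ⬝ᵥ v = 1 ∧ r = (C *ᵥ v) ⬝ᵥ (C *ᵥ v)} := by
    refine ⟨c • e, hV c e he, ?_, ?_⟩
    · simp only [smul_dotProduct, dotProduct_smul, smul_eq_mul, ← hc]
      ring
    · simp only [mulVec_smul, smul_dotProduct, dotProduct_smul, smul_eq_mul]
      ring
  have hbdd : BddBelow {r : ℝ | ∃ v, v ∈ V ∧ v ⬝ᵥ v = 1 ∧ r = (C *ᵥ v) ⬝ᵥ (C *ᵥ v)} :=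
    ⟨0, by rintro _ ⟨v, -, -, rfl⟩; exact dotProduct_self_nonneg _⟩
  calc _ ≤ c ^ 2 * ((C *ᵥ e) ⬝ᵥ (C *ᵥ e)) * (e ⬝ᵥ e) := by gcongr; exact csInf_le hbdd hmem
    _ = (C *ᵥ e) ⬝ᵥ (C *ᵥ e) := by rw [mul_right_comm, hc, one_mul]

section Expectation

variable {ι Ω : Type*} [Fintype ι] [MeasurableSpace Ω] {P : Measure Ω} {X : Ω → Matrix ι ι ℝ}

lemma integrable_dotProduct_mulVec (hX : ∀ i j, Integrable (fun ω => X ω i j) P) (u : ι → ℝ) :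
    Integrable (fun ω => u ⬝ᵥ X ω *ᵥ u) P := by
  simp only [dotProduct_mulVec_eq_sum]
  exact integrable_finsetSum _ fun i _ => integrable_finsetSum _ fun j _ => (hX i j).const_mul _

lemma integral_dotProduct_mulVec (hX : ∀ i j, Integrable (fun ω => X ω i j) P)
    {H : Matrix ι ι ℝ} (hH : ∀ i j, H i j = ∫ ω, X ω i j ∂P) (u : ι → ℝ) :
    ∫ ω, u ⬝ᵥ X ω *ᵥ u ∂P = u ⬝ᵥ H *ᵥ u := by
  simp only [dotProduct_mulVec_eq_sum, hH]
  rw [integral_finsetSum _ fun i _ => integrable_finsetSum _ fun j _ => (hX i j).const_mul _]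
  refine Finset.sum_congr rfl fun i _ => ?_
  rw [integral_finsetSum _ fun j _ => (hX i j).const_mul _]
  simp only [integral_const_mul]

end Expectation

section BasicMethod

variable {m n q : ℕ} {A : Matrix (Fin m) (Fin n) ℝ} {b : Fin m → ℝ}

noncomputable def basicMethodStep (A : Matrix (Fin m) (Fin n) ℝ) (b : Fin m → ℝ) (ζ : ℝ)
    (S : Matrix (Fin m) (Fin q) ℝ) (x : Fin n → ℝ) : Fin n → ℝ :=
  if sres A b S x = 0 then x
  else x - ((2 - ζ) * ((sres A b S x ⬝ᵥ sres A b S x) / (sgrad A b S x ⬝ᵥ sgrad A b S x))) •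
    sgrad A b S x

lemma sres_eq_mulVec_sub {xstar : Fin n → ℝ} (hxs : A *ᵥ xstar = b)
    (S : Matrix (Fin m) (Fin q) ℝ) (x : Fin n → ℝ) :
    sres A b S x = (Sᵀ * A) *ᵥ (x - xstar) := by
  rw [sres, ← hxs, ← mulVec_sub, mulVec_mulVec]

lemma sgrad_eq_transpose_mulVec_sres (S : Matrix (Fin m) (Fin q) ℝ) (x : Fin n → ℝ) :
    sgrad A b S x = (Sᵀ * A)ᵀ *ᵥ sres A b S x := by
  rw [sgrad, sres, transpose_mul, transpose_transpose, ← mulVec_mulVec]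

lemma basicMethodStep_sub_eq_relaxedPolyakStep {xstar : Fin n → ℝ} (hxs : A *ᵥ xstar = b)
    (ζ : ℝ) (S : Matrix (Fin m) (Fin q) ℝ) (x : Fin n → ℝ) :
    basicMethodStep A b ζ S x - xstar = relaxedPolyakStep (Sᵀ * A) ζ (x - xstar) := by
  rw [basicMethodStep, sgrad_eq_transpose_mulVec_sres, sres_eq_mulVec_sub hxs]
  split_ifs with h
  · simp [relaxedPolyakStep, h]
  · rw [relaxedPolyakStep, sub_right_comm]

lemma basicMethodStep_sub_dotProduct_self_le {xstar : Fin n → ℝ} (hxs : A *ᵥ xstar = b)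
    {S : Matrix (Fin m) (Fin q) ℝ} {lam ζ : ℝ} (hlam : 0 < lam)
    (hS : ∀ y, y ⬝ᵥ (Aᵀ * S * Sᵀ * A) *ᵥ y ≤ lam * (y ⬝ᵥ y)) (hζ : ζ ∈ Set.Icc 0 2)
    (x : Fin n → ℝ) :
    (basicMethodStep A b ζ S x - xstar) ⬝ᵥ (basicMethodStep A b ζ S x - xstar) ≤
      (x - xstar) ⬝ᵥ (x - xstar) -
        ζ * (2 - ζ) / lam * ((A *ᵥ (x - xstar)) ⬝ᵥ (S * Sᵀ) *ᵥ (A *ᵥ (x - xstar))) := by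
  have hM : ∀ y, ((Sᵀ * A) *ᵥ y) ⬝ᵥ ((Sᵀ * A) *ᵥ y) ≤ lam * (y ⬝ᵥ y) := fun y => by
    rw [← dotProduct_mulVec_transpose_mul_self, transpose_mul, transpose_transpose,
      ← Matrix.mul_assoc]
    exact hS y
  have hresidual : ((Sᵀ * A) *ᵥ (x - xstar)) ⬝ᵥ ((Sᵀ * A) *ᵥ (x - xstar)) =
      (A *ᵥ (x - xstar)) ⬝ᵥ (S * Sᵀ) *ᵥ (A *ᵥ (x - xstar)) := by
    rw [← mulVec_mulVec, ← dotProduct_mulVec_transpose_mul_self, transpose_transpose]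
  rw [basicMethodStep_sub_eq_relaxedPolyakStep hxs, ← hresidual]
  exact relaxedPolyakStep_dotProduct_self_le hlam hM hζ _

end BasicMethod

theorem basic_method_expected_error_bound_general
    {m n q : ℕ} (A : Matrix (Fin m) (Fin n) ℝ) (b : Fin m → ℝ)
    (xstar : Fin n → ℝ) (hxs : A.mulVec xstar = b) (hxs' : ∃ y, xstar = Aᵀ.mulVec y)
    {Ω : Type*} [MeasurableSpace Ω] (P : Measure Ω) [IsProbabilityMeasure P]
    (S : Ω → Matrix (Fin m) (Fin q) ℝ)
    (hSint : ∀ i j, Integrable (fun ω => (S ω * (S ω)ᵀ) i j) P)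
    (H : Matrix (Fin m) (Fin m) ℝ)
    (hH : ∀ i j, H i j = ∫ ω, (S ω * (S ω)ᵀ) i j ∂P)
    (hHpd : H.PosDef)
    (lam : ℝ) (hlam : 0 < lam)
    (hlamb : ∀ᵐ ω ∂P, ∀ y : Fin n → ℝ,
      y ⬝ᵥ (Aᵀ * S ω * (S ω)ᵀ * A).mulVec y ≤ lam * (y ⬝ᵥ y))
    (ζ : ℝ) (hζ : ζ ∈ Set.Ioo (0 : ℝ) 2)
    (x : Fin n → ℝ) (hx : ∃ y, x = Aᵀ.mulVec y)
    (xplus : Ω → Fin n → ℝ)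
    (hxplus : ∀ ω, xplus ω =
      if sres A b (S ω) x = 0 then x
      else x - ((2 - ζ) *
        ((sres A b (S ω) x ⬝ᵥ sres A b (S ω) x) /
          (sgrad A b (S ω) x ⬝ᵥ sgrad A b (S ω) x))) • sgrad A b (S ω) x)
    (σ2 : ℝ)
    (hσ2 : σ2 = sInf {r : ℝ | ∃ v : Fin n → ℝ, (∃ y, v = Aᵀ.mulVec y) ∧ v ⬝ᵥ v = 1 ∧
      r = ((hHpd.posSemidef.sqrt * A).mulVec v) ⬝ᵥ ((hHpd.posSemidef.sqrt * A).mulVec v)}) :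
    ∫ ω, (xplus ω - xstar) ⬝ᵥ (xplus ω - xstar) ∂P ≤
      (1 - ζ * (2 - ζ) * σ2 / lam) * ((x - xstar) ⬝ᵥ (x - xstar)) := by
  set e := x - xstar
  set c := ζ * (2 - ζ) / lam
  have hc : 0 ≤ c := div_nonneg (mul_nonneg hζ.1.le (by linarith [hζ.2])) hlam.le
  have he : e ∈ {v | ∃ y, v = Aᵀ *ᵥ y} := by
    obtain ⟨y, rfl⟩ := hx
    obtain ⟨y', rfl⟩ := hxs'
    exact ⟨y - y', (mulVec_sub _ _ _).symm⟩
  have hpointwise : ∀ᵐ ω ∂P, (xplus ω - xstar) ⬝ᵥ (xplus ω - xstar) ≤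
      e ⬝ᵥ e - c * ((A *ᵥ e) ⬝ᵥ (S ω * (S ω)ᵀ) *ᵥ (A *ᵥ e)) := by
    filter_upwards [hlamb] with ω hω
    rw [hxplus, ← basicMethodStep]
    exact basicMethodStep_sub_dotProduct_self_le hxs hlam hω (Set.Ioo_subset_Icc_self hζ) x
  have hσ : σ2 * (e ⬝ᵥ e) ≤ (A *ᵥ e) ⬝ᵥ H *ᵥ (A *ᵥ e) := by
    rw [hσ2, ← hHpd.posSemidef.sqrt_mulVec_dotProduct_self, mulVec_mulVec]
    exact sInf_mul_dotProduct_self_le_of_smul_mem (V := {v | ∃ y, v = Aᵀ *ᵥ y}) _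
      (fun t v ⟨y, hy⟩ => ⟨t • y, by rw [hy, mulVec_smul]⟩) he
  have hint := (integrable_dotProduct_mulVec hSint (A *ᵥ e)).const_mul c
  calc ∫ ω, (xplus ω - xstar) ⬝ᵥ (xplus ω - xstar) ∂P
      ≤ ∫ ω, (e ⬝ᵥ e - c * ((A *ᵥ e) ⬝ᵥ (S ω * (S ω)ᵀ) *ᵥ (A *ᵥ e))) ∂P :=
        integral_mono_of_nonneg (.of_forall fun ω => dotProduct_self_nonneg _)
          ((integrable_const _).sub hint) hpointwise
    _ = e ⬝ᵥ e - c * ((A *ᵥ e) ⬝ᵥ H *ᵥ (A *ᵥ e)) := by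
        rw [integral_sub (integrable_const _) hint, integral_const_mul,
          integral_dotProduct_mulVec hSint hH]
        simp
    _ ≤ e ⬝ᵥ e - c * (σ2 * (e ⬝ᵥ e)) := by gcongr
    _ = (1 - ζ * (2 - ζ) * σ2 / lam) * (e ⬝ᵥ e) := by ring

/-- Theorem 3.1 (one-step convergence of the basic method, bounded sample space):
if `H = E[S Sᵀ]` is positive definite, `λ` almost surely bounds
`λ_max(Aᵀ S Sᵀ A)`, and `x⁺` is one step of the basic method with relaxation
parameter `ζ ∈ (0,2)` from `x ∈ Range(Aᵀ)`, then
`E[‖x⁺ − x*‖₂²] ≤ (1 − ζ(2−ζ)σ²/λ)‖x − x*‖₂²`, where `x*` is the solution of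
`A x = b` in `Range(Aᵀ)` and `σ²` is the square of the smallest nonzero singular
value of `H^{1/2} A`. -/
theorem basic_method_expected_error_bound
    {m n q : ℕ} (A : Matrix (Fin m) (Fin n) ℝ) (b : Fin m → ℝ)
    (xstar : Fin n → ℝ) (hxs : A.mulVec xstar = b) (hxs' : ∃ y, xstar = Aᵀ.mulVec y)
    {Ω : Type*} [MeasurableSpace Ω] (P : Measure Ω) [IsProbabilityMeasure P]
    (S : Ω → Matrix (Fin m) (Fin q) ℝ)
    (hSmeas : ∀ i j, Measurable fun ω => S ω i j)
    (hSint : ∀ i j, Integrable (fun ω => (S ω * (S ω)ᵀ) i j) P)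
    (H : Matrix (Fin m) (Fin m) ℝ)
    (hH : ∀ i j, H i j = ∫ ω, (S ω * (S ω)ᵀ) i j ∂P)
    (hHpd : H.PosDef)
    (lam : ℝ) (hlam : 0 < lam)
    (hlamb : ∀ᵐ ω ∂P, ∀ y : Fin n → ℝ,
      y ⬝ᵥ (Aᵀ * S ω * (S ω)ᵀ * A).mulVec y ≤ lam * (y ⬝ᵥ y))
    (ζ : ℝ) (hζ : ζ ∈ Set.Ioo (0 : ℝ) 2)
    (x : Fin n → ℝ) (hx : ∃ y, x = Aᵀ.mulVec y)
    (xplus : Ω → Fin n → ℝ)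
    (hxplus : ∀ ω, xplus ω =
      if sres A b (S ω) x = 0 then x
      else x - ((2 - ζ) *
        ((sres A b (S ω) x ⬝ᵥ sres A b (S ω) x) /
          (sgrad A b (S ω) x ⬝ᵥ sgrad A b (S ω) x))) • sgrad A b (S ω) x)
    (σ2 : ℝ)
    (hσ2 : σ2 = sInf {r : ℝ | ∃ v : Fin n → ℝ, (∃ y, v = Aᵀ.mulVec y) ∧ v ⬝ᵥ v = 1 ∧
      r = ((hHpd.posSemidef.sqrt * A).mulVec v) ⬝ᵥ ((hHpd.posSemidef.sqrt * A).mulVec v)}) :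
    ∫ ω, (xplus ω - xstar) ⬝ᵥ (xplus ω - xstar) ∂P ≤
      (1 - ζ * (2 - ζ) * σ2 / lam) * ((x - xstar) ⬝ᵥ (x - xstar)) :=
  basic_method_expected_error_bound_general A b xstar hxs hxs' P S hSint H hH hHpd lam hlam hlamb ζ
    hζ x hx xplus hxplus σ2 hσ2
end

section
/- Let A ∈ ℝ^{m×n}, b ∈ ℝ^m, and let z ∈ ℝⁿ satisfy Az = b. Let (S_k)_{k≥0} be matrices in ℝ^{m×q}, and define sequences (x^k)_{k≥0} in ℝⁿ and (p_k)_{k≥0} in ℝⁿ by: x⁰ ∈ ℝⁿ given, p₀ := −AᵀS₀S₀ᵀ(Ax⁰ − b), and for k ≥ 0: δ_k := ‖S_kᵀ(Ax^k − b)‖₂² / ‖p_k‖₂², x^{k+1} := x^k + δ_k p_k, η_k := ⟨AᵀS_{k+1}S_{k+1}ᵀ(Ax^{k+1} − b), p_k⟩ / ‖p_k‖₂², p_{k+1} := −AᵀS_{k+1}S_{k+1}ᵀ(Ax^{k+1} − b) + η_k p_k. Assume p_k ≠ 0 for all k. Then for every k ≥ 0, ⟨x^{k+1} − z, p_k⟩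 = 0. -/
open Matrix

lemma err_dot_sgrad {m n q : ℕ} (A : Matrix (Fin m) (Fin n) ℝ) (b : Fin m → ℝ)
    (z : Fin n → ℝ) (hz : A.mulVec z = b) (S : Matrix (Fin m) (Fin q) ℝ)
    (x : Fin n → ℝ) :
    (x - z) ⬝ᵥ sgrad A b S x = sres A b S x ⬝ᵥ sres A b S x := by
  unfold sgrad sres
  rw [Matrix.dotProduct_mulVec, Matrix.vecMul_transpose, Matrix.mulVec_sub, hz,
    Matrix.dotProduct_mulVec, Matrix.mulVec_transpose]

/-- For the conjugate-gradient-type recursion (5.1) of the ASHBM method, the new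
error is orthogonal to the search direction: `⟨x^{k+1} − z, p_k⟩ = 0` for any
solution `z` of `A z = b`. -/
theorem cg_form_error_orthogonal_to_direction
    {m n q : ℕ} (A : Matrix (Fin m) (Fin n) ℝ) (b : Fin m → ℝ)
    (z : Fin n → ℝ) (hz : A.mulVec z = b)
    (S : ℕ → Matrix (Fin m) (Fin q) ℝ)
    (x p : ℕ → Fin n → ℝ)
    (hp0 : p 0 = -sgrad A b (S 0) (x 0))
    (hxrec : ∀ k, x (k + 1) = x k +
      ((sres A b (S k) (x k) ⬝ᵥ sres A b (S k) (x k)) / (p k ⬝ᵥ p k)) • p k)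
    (hprec : ∀ k, p (k + 1) = -sgrad A b (S (k + 1)) (x (k + 1)) +
      ((sgrad A b (S (k + 1)) (x (k + 1)) ⬝ᵥ p k) / (p k ⬝ᵥ p k)) • p k)
    (hpne : ∀ k, p k ≠ 0) :
    ∀ k, (x (k + 1) - z) ⬝ᵥ p k = 0 := by
  have hppne : ∀ k, p k ⬝ᵥ p k ≠ 0 := fun k h =>
    hpne k (by simpa using (dotProduct_self_eq_zero).1 h)
  -- general step: if ⟨x k − z, p k⟩ = −‖sres‖², then ⟨x (k+1) − z, p k⟩ = 0
  have step : ∀ k, (x k - z) ⬝ᵥ p k = -(sres A b (S k) (x k) ⬝ᵥ sres A b (S k) (x k)) →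
      (x (k + 1) - z) ⬝ᵥ p k = 0 := by
    intro k hk
    rw [hxrec k, add_sub_right_comm, add_dotProduct, hk, smul_dotProduct, smul_eq_mul,
      div_mul_cancel₀ _ (hppne k)]
    ring
  intro k
  induction k with
  | zero =>
    apply step
    rw [hp0, dotProduct_neg, err_dot_sgrad A b z hz]
  | succ k ih =>
    apply step
    rw [hprec k, dotProduct_add, dotProduct_neg, err_dot_sgrad A b z hz,
      dotProduct_smul, smul_eq_mul, ih, mul_zero, add_zero]
end

section
/- Let A ∈ ℝ^{m×n}, b ∈ ℝ^m, and let z ∈ ℝⁿ satisfy Az = b. Let x ∈ ℝⁿ and S ∈ ℝ^{m×q} with Sᵀ(Ax − b) ≠ 0, set g := AᵀSSᵀ(Ax − b), and let d ∈ ℝⁿ be arbitrary. Let x⁺ be an orthogonal projection of z onto the affine set Π := {x + αg + βd : α, β ∈ ℝ}, i.e., x⁺ ∈ Π and ‖x⁺ − z‖₂ ≤ ‖y − z‖₂ for all y ∈ Π. Then x⁺ ≠ x. -/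
open Matrix

private lemma dp_expand {k : ℕ} (u v : Fin k → ℝ) (c : ℝ) :
    (u + c • v) ⬝ᵥ (u + c • v) = u ⬝ᵥ u + 2 * c * (v ⬝ᵥ u) + c ^ 2 * (v ⬝ᵥ v) := by
  rw [add_dotProduct, dotProduct_add, dotProduct_add,
    smul_dotProduct, smul_dotProduct, dotProduct_smul,
    dotProduct_smul, dotProduct_comm u v]
  simp only [smul_eq_mul]
  ring

/-- Proposition 4.1 (i): if `Sᵀ(Ax − b) ≠ 0` and `x⁺` is an orthogonal projection
of the solution `z` onto the affine set `Π = {x + αg + βd}` with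
`g = Aᵀ S Sᵀ(Ax − b)`, then `x⁺ ≠ x`. -/
theorem projection_step_moves
    {m n q : ℕ} (A : Matrix (Fin m) (Fin n) ℝ) (b : Fin m → ℝ)
    (z : Fin n → ℝ) (hz : A.mulVec z = b)
    (x : Fin n → ℝ) (S : Matrix (Fin m) (Fin q) ℝ)
    (hS : sres A b S x ≠ 0)
    (d : Fin n → ℝ) (xplus : Fin n → ℝ)
    (hmem : ∃ α β : ℝ, xplus = x + α • sgrad A b S x + β • d)
    (hmin : ∀ α β : ℝ, (xplus - z) ⬝ᵥ (xplus - z) ≤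
      ((x + α • sgrad A b S x + β • d) - z) ⬝ᵥ ((x + α • sgrad A b S x + β • d) - z)) :
    xplus ≠ x := by
  intro hx
  set g : Fin n → ℝ := sgrad A b S x with hg
  set r : Fin q → ℝ := sres A b S x with hrdef
  -- key identity: ⟨g, x - z⟩ = ‖Sᵀ(Ax−b)‖²
  have key : g ⬝ᵥ (x - z) = r ⬝ᵥ r := by
    have hr : A.mulVec (x - z) = A.mulVec x - b := by rw [Matrix.mulVec_sub, hz]
    rw [hg, hrdef, sgrad, sres, Matrix.mulVec_transpose, ← Matrix.dotProduct_mulVec, hr,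
      Matrix.mulVec_transpose, ← Matrix.dotProduct_mulVec, dotProduct_comm]
  have hrpos : 0 < r ⬝ᵥ r := by
    rcases lt_or_eq_of_le (dp_self_nonneg r) with h | h
    · exact h
    · exact absurd ((dotProduct_self_eq_zero).mp h.symm) hS
  have ht : 0 < g ⬝ᵥ (x - z) := key ▸ hrpos
  have hG : 0 < g ⬝ᵥ g := by
    rcases lt_or_eq_of_le (dp_self_nonneg g) with h | h
    · exact h
    · have : g = 0 := (dotProduct_self_eq_zero).mp h.symm
      rw [this] at ht; simp at ht
  -- use α = -(g⬝(x-z))/(g⬝g), β = 0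
  set t : ℝ := g ⬝ᵥ (x - z)
  set G : ℝ := g ⬝ᵥ g
  have h1 := hmin (-(t / G)) 0
  rw [hx] at h1
  have expand : ((x + (-(t / G)) • g + (0:ℝ) • d) - z) ⬝ᵥ ((x + (-(t / G)) • g + (0:ℝ) • d) - z)
      = (x - z) ⬝ᵥ (x - z) - 2 * (t / G) * t + (t / G) ^ 2 * G := by
    have h2 : (x + (-(t / G)) • g + (0:ℝ) • d) - z = (x - z) + (-(t / G)) • g := by
      module
    rw [h2, dp_expand]
    have : g ⬝ᵥ (x - z) = t := rfl
    rw [this]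
    ring
  rw [expand] at h1
  have hGne : G ≠ 0 := ne_of_gt hG
  have hfinal : (x - z) ⬝ᵥ (x - z) - 2 * (t / G) * t + (t / G) ^ 2 * G
      = (x - z) ⬝ᵥ (x - z) - t ^ 2 / G := by field_simp; ring
  rw [hfinal] at h1
  have : t ^ 2 / G ≤ 0 := by linarith
  have : 0 < t ^ 2 / G := div_pos (pow_pos ht 2) hG
  linarith
end

section
/- Let A ∈ ℝ^{m×n}, b ∈ ℝ^m, and let z ∈ ℝⁿ satisfy Az = b. Let x_prev, x ∈ ℝⁿ with d := x − x_prev ≠ 0 and ⟨x − z, d⟩ = 0 (the projection property of the previous step). Let S ∈ ℝ^{m×q} with Sᵀ(Ax − b) ≠ 0 and set g := AᵀSSᵀ(Ax − b). Let x⁺ be an orthogonal projection of z onto the affine set Π := {x + αg + βd : α, β ∈ ℝ}. Then g and d are linearly independent (i.e., the affine set Π has dimension 2). -/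
open Matrix

/-- Proposition 4.1 (ii): if `d = x − x_prev ≠ 0`, `⟨x − z, d⟩ = 0` (the
projection property of the previous step), and `Sᵀ(Ax − b) ≠ 0`, then
`g = Aᵀ S Sᵀ(Ax − b)` and `d` are linearly independent, i.e. the affine set
`Π = {x + αg + βd}` (onto which the solution `z` is projected to obtain `x⁺`)
has dimension 2. -/
theorem momentum_direction_linearIndependent
    {m n q : ℕ} (A : Matrix (Fin m) (Fin n) ℝ) (b : Fin m → ℝ)
    (z : Fin n → ℝ) (hz : A.mulVec z = b)
    (xprev x : Fin n → ℝ)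
    (hd : x - xprev ≠ 0)
    (horth : (x - z) ⬝ᵥ (x - xprev) = 0)
    (S : Matrix (Fin m) (Fin q) ℝ)
    (hS : sres A b S x ≠ 0)
    (xplus : Fin n → ℝ)
    (hmem : ∃ α β : ℝ, xplus = x + α • sgrad A b S x + β • (x - xprev))
    (hmin : ∀ α β : ℝ, (xplus - z) ⬝ᵥ (xplus - z) ≤
      ((x + α • sgrad A b S x + β • (x - xprev)) - z) ⬝ᵥ
        ((x + α • sgrad A b S x + β • (x - xprev)) - z)) :
    LinearIndependent ℝ ![sgrad A b S x, x - xprev] := by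
  have key : sgrad A b S x ⬝ᵥ (x - z) = sres A b S x ⬝ᵥ sres A b S x := by
    have h : A.mulVec (x - z) = A.mulVec x - b := by rw [mulVec_sub, hz]
    rw [sgrad, sres, mulVec_transpose, ← dotProduct_mulVec, h, dotProduct_comm,
      dotProduct_mulVec, ← mulVec_transpose, dotProduct_comm]
  have hpos : sres A b S x ⬝ᵥ sres A b S x ≠ 0 := by
    simpa [dotProduct_self_eq_zero] using hS
  rw [LinearIndependent.pair_iff]
  intro s t hst
  have h1 : (s • sgrad A b S x + t • (x - xprev)) ⬝ᵥ (x - z) = 0 := by rw [hst]; simp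
  have h2 : s * (sgrad A b S x ⬝ᵥ (x - z)) = 0 := by
    have horth' : (x - xprev) ⬝ᵥ (x - z) = 0 := by rwa [dotProduct_comm]
    rw [add_dotProduct, smul_dotProduct, smul_dotProduct, horth', smul_zero, add_zero,
      smul_eq_mul] at h1
    exact h1
  have hs : s = 0 := by
    rcases mul_eq_zero.mp h2 with h | h
    · exact h
    · exact absurd (key ▸ h) hpos
  subst hs
  simp only [zero_smul, zero_add] at hst
  rcases smul_eq_zero.mp hst with h | h
  · exact ⟨rfl, h⟩
  · exact absurd h hd
end

section
/- Let A ∈ ℝ^{m×n}, b ∈ ℝ^m with Ax = b consistent, let x⁰ ∈ ℝⁿ, and let (S_k)_{k≥0} be matrices in ℝ^{m×q}. Define the ASHBM sequence (x^k): with g_k := AᵀS_kS_kᵀ(Ax^k − b) and r^k := Ax^k − b, set x¹ := x⁰ − (‖S₀ᵀr⁰‖₂²/‖g₀‖₂²)·g₀, and for k ≥ 1, with d_k := x^k − x^{k−1} and Δ_k := ‖g_k‖₂²‖d_k‖₂² − ⟨g_k, d_k⟩², set x^{k+1} := x^k − α_k g_k + β_k d_k where α_k := ‖d_k‖₂²‖S_kᵀr^k‖₂²/Δ_k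 and β_k := ⟨g_k, d_k⟩‖S_kᵀr^k‖₂²/Δ_k. Define the conjugate-gradient-type sequence (y^k, p_k): y⁰ := x⁰, p₀ := −AᵀS₀S₀ᵀ(Ay⁰ − b), and for k ≥ 0: δ_k := ‖S_kᵀ(Ay^k − b)‖₂²/‖p_k‖₂², y^{k+1} := y^k + δ_k p_k, η_k := ⟨AᵀS_{k+1}S_{k+1}ᵀ(Ay^{k+1} − b), p_k⟩/‖p_k‖₂², p_{k+1} := −AᵀS_{k+1}S_{k+1}ᵀ(Ay^{k+1} − b) + η_k p_k. Assume S_kᵀ(Ax^k − b) ≠ 0 for all k ≥ 0 and Δ_k ≠ 0 for all k ≥ 1. Then p_k ≠ 0 and x^k = y^k for all k ≥ 0. -/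
open Matrix

lemma tdot {m n : ℕ} (M : Matrix (Fin m) (Fin n) ℝ) (u : Fin m → ℝ) (v : Fin n → ℝ) :
    Mᵀ.mulVec u ⬝ᵥ v = u ⬝ᵥ M.mulVec v := by
  rw [Matrix.mulVec_transpose, Matrix.dotProduct_mulVec]

lemma sgrad_dot {m n q : ℕ} (A : Matrix (Fin m) (Fin n) ℝ) (b : Fin m → ℝ)
    (S : Matrix (Fin m) (Fin q) ℝ) (x w : Fin n → ℝ) (hw : A.mulVec w = b) :
    sgrad A b S x ⬝ᵥ (x - w) = sres A b S x ⬝ᵥ sres A b S x := by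
  have h1 : A.mulVec (x - w) = A.mulVec x - b := by rw [Matrix.mulVec_sub, hw]
  calc sgrad A b S x ⬝ᵥ (x - w)
      = (S.mulVec (sres A b S x)) ⬝ᵥ (A.mulVec (x - w)) := tdot _ _ _
    _ = (S.mulVec (sres A b S x)) ⬝ᵥ (A.mulVec x - b) := by rw [h1]
    _ = (Sᵀᵀ.mulVec (sres A b S x)) ⬝ᵥ (A.mulVec x - b) := by rw [Matrix.transpose_transpose]
    _ = sres A b S x ⬝ᵥ sres A b S x := tdot _ _ _

lemma sgrad_ne_zero {m n q : ℕ} (A : Matrix (Fin m) (Fin n) ℝ) (b : Fin m → ℝ)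
    (hcons : ∃ w : Fin n → ℝ, A.mulVec w = b)
    (S : Matrix (Fin m) (Fin q) ℝ) (x : Fin n → ℝ) (h : sres A b S x ≠ 0) :
    sgrad A b S x ≠ 0 := by
  obtain ⟨w, hw⟩ := hcons
  intro h0
  have := sgrad_dot A b S x w hw
  rw [h0, zero_dotProduct] at this
  exact h (dotProduct_self_eq_zero.mp this.symm)

/-- Theorem 5.1: the ASHBM iteration (first step a Polyak step, then the heavy
ball update with the adaptive parameters (4.4)) coincides with the
conjugate-gradient-type recursion (5.1); in particular the CG search directions
`p_k` never vanish. -/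
theorem ashbm_eq_cg_form
    {m n q : ℕ} (A : Matrix (Fin m) (Fin n) ℝ) (b : Fin m → ℝ)
    (hcons : ∃ w : Fin n → ℝ, A.mulVec w = b)
    (S : ℕ → Matrix (Fin m) (Fin q) ℝ)
    (x y p : ℕ → Fin n → ℝ)
    (hS : ∀ k, sres A b (S k) (x k) ≠ 0)
    (Δ : ℕ → ℝ)
    (hΔdef : ∀ k, Δ k =
      (sgrad A b (S k) (x k) ⬝ᵥ sgrad A b (S k) (x k)) *
        ((x k - x (k - 1)) ⬝ᵥ (x k - x (k - 1))) -
      (sgrad A b (S k) (x k) ⬝ᵥ (x k - x (k - 1))) ^ 2)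
    (hΔ : ∀ k, 1 ≤ k → Δ k ≠ 0)
    (hx1 : x 1 = x 0 -
      ((sres A b (S 0) (x 0) ⬝ᵥ sres A b (S 0) (x 0)) /
        (sgrad A b (S 0) (x 0) ⬝ᵥ sgrad A b (S 0) (x 0))) • sgrad A b (S 0) (x 0))
    (hxrec : ∀ k, 1 ≤ k → x (k + 1) = x k
      - (((x k - x (k - 1)) ⬝ᵥ (x k - x (k - 1))) *
          (sres A b (S k) (x k) ⬝ᵥ sres A b (S k) (x k)) / Δ k) • sgrad A b (S k) (x k)
      + ((sgrad A b (S k) (x k) ⬝ᵥ (x k - x (k - 1))) *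
          (sres A b (S k) (x k) ⬝ᵥ sres A b (S k) (x k)) / Δ k) • (x k - x (k - 1)))
    (hy0 : y 0 = x 0)
    (hp0 : p 0 = -sgrad A b (S 0) (y 0))
    (hyrec : ∀ k, y (k + 1) = y k +
      ((sres A b (S k) (y k) ⬝ᵥ sres A b (S k) (y k)) / (p k ⬝ᵥ p k)) • p k)
    (hprec : ∀ k, p (k + 1) = -sgrad A b (S (k + 1)) (y (k + 1)) +
      ((sgrad A b (S (k + 1)) (y (k + 1)) ⬝ᵥ p k) / (p k ⬝ᵥ p k)) • p k) :
    ∀ k, p k ≠ 0 ∧ x k = y k := by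
  have hs2 : ∀ k, sres A b (S k) (x k) ⬝ᵥ sres A b (S k) (x k) ≠ 0 := fun k h =>
    hS k (dotProduct_self_eq_zero.mp h)
  have key : ∀ k, p k ≠ 0 ∧ x k = y k ∧ x (k + 1) = y (k + 1) ∧
      ∃ c : ℝ, c ≠ 0 ∧ x (k + 1) = x k + c • p k := by
    intro k
    induction k with
    | zero =>
      have hg0 : sgrad A b (S 0) (x 0) ≠ 0 := sgrad_ne_zero A b hcons (S 0) (x 0) (hS 0)
      have hG : sgrad A b (S 0) (x 0) ⬝ᵥ sgrad A b (S 0) (x 0) ≠ 0 := fun h =>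
        hg0 (dotProduct_self_eq_zero.mp h)
      have hp0' : p 0 = -sgrad A b (S 0) (x 0) := by rw [hp0, hy0]
      have hpne : p 0 ≠ 0 := by rw [hp0']; exact neg_ne_zero.mpr hg0
      have hpp : p 0 ⬝ᵥ p 0 = sgrad A b (S 0) (x 0) ⬝ᵥ sgrad A b (S 0) (x 0) := by
        rw [hp0', neg_dotProduct, dotProduct_neg, neg_neg]
      have hx1' : x 1 = x 0 +
          ((sres A b (S 0) (x 0) ⬝ᵥ sres A b (S 0) (x 0)) /
            (sgrad A b (S 0) (x 0) ⬝ᵥ sgrad A b (S 0) (x 0))) • p 0 := by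
        rw [hx1, hp0', smul_neg, sub_eq_add_neg]
      refine ⟨hpne, hy0.symm, ?_, _, div_ne_zero (hs2 0) hG, hx1'⟩
      rw [hx1', hyrec 0, hy0, hpp]
    | succ k ih =>
      obtain ⟨hp, hxy, hxy1, c, hc, hd⟩ := ih
      have hP : p k ⬝ᵥ p k ≠ 0 := fun h => hp (dotProduct_self_eq_zero.mp h)
      set g := sgrad A b (S (k + 1)) (x (k + 1)) with hg
      set s2 := sres A b (S (k + 1)) (x (k + 1)) ⬝ᵥ sres A b (S (k + 1)) (x (k + 1)) with hs2def
      set P := p k ⬝ᵥ p k with hPdef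
      set t := g ⬝ᵥ p k with ht
      set G := g ⬝ᵥ g with hGdef
      have hΔne : Δ (k + 1) ≠ 0 := hΔ (k + 1) (by omega)
      have hdm : x (k + 1) - x k = c • p k := by rw [hd]; abel
      have hdd : (x (k + 1) - x k) ⬝ᵥ (x (k + 1) - x k) = c ^ 2 * P := by
        rw [hdm, smul_dotProduct, dotProduct_smul, smul_eq_mul, smul_eq_mul, ← hPdef]
        ring
      have hgd : g ⬝ᵥ (x (k + 1) - x k) = c * t := by
        rw [hdm, dotProduct_smul, smul_eq_mul, ← ht]
      have hΔv : Δ (k + 1) = c ^ 2 * (G * P - t ^ 2) := by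
        rw [hΔdef (k + 1)]
        simp only [Nat.add_sub_cancel]
        rw [← hg, hdd, hgd, ← hGdef]
        ring
      have hpk1 : p (k + 1) = -g + (t / P) • p k := by
        rw [hprec k, ← hxy1]
      have hQ : p (k + 1) ⬝ᵥ p (k + 1) = G - t ^ 2 / P := by
        rw [hpk1]
        rw [add_dotProduct, dotProduct_add, dotProduct_add,
          neg_dotProduct, dotProduct_neg, neg_dotProduct,
          dotProduct_neg, smul_dotProduct, smul_dotProduct,
          dotProduct_smul, dotProduct_smul, neg_neg, smul_eq_mul, smul_eq_mul,
          smul_eq_mul, dotProduct_comm (p k) g, ← hGdef, ← ht, ← hPdef]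
        field_simp
        rw [smul_eq_mul, div_mul_cancel₀ t hP]
        ring
      have hQΔ : (p (k + 1) ⬝ᵥ p (k + 1)) * (c ^ 2 * P) = Δ (k + 1) := by
        rw [hQ, hΔv]
        field_simp
      have hp1 : p (k + 1) ≠ 0 := by
        intro h
        apply hΔne
        rw [← hQΔ, h, dotProduct_self_eq_zero.mpr rfl, zero_mul]
      have hQ0 : p (k + 1) ⬝ᵥ p (k + 1) ≠ 0 := fun h =>
        hp1 (dotProduct_self_eq_zero.mp h)
      have hc' : c ^ 2 * P * s2 / Δ (k + 1) ≠ 0 :=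
        div_ne_zero (mul_ne_zero (mul_ne_zero (pow_ne_zero 2 hc) hP) (hs2 (k + 1))) hΔne
      have hx2 : x (k + 2) = x (k + 1) + (c ^ 2 * P * s2 / Δ (k + 1)) • p (k + 1) := by
        rw [hxrec (k + 1) (by omega)]
        simp only [Nat.add_sub_cancel]
        rw [← hg, hdd, hgd, hdm, hpk1, ← hs2def]
        match_scalars <;> (field_simp; try ring)
      have hcoef : s2 / (p (k + 1) ⬝ᵥ p (k + 1)) = c ^ 2 * P * s2 / Δ (k + 1) := by
        rw [← hQΔ]
        field_simp
      refine ⟨hp1, hxy1, ?_, _, hc', hx2⟩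
      rw [hx2, hyrec (k + 1), ← hxy1, ← hs2def, hcoef]
  intro k
  exact ⟨(key k).1, (key k).2.1⟩
end

section
/- Let A ∈ ℝ^{m×n}, b ∈ ℝ^m, let (S_k)_{k≥0} be matrices in ℝ^{m×q}, and define sequences (x^k) and (p_k) by: x⁰ ∈ ℝⁿ given, p₀ := −AᵀS₀S₀ᵀ(Ax⁰ − b), and for k ≥ 0: δ_k := ‖S_kᵀ(Ax^k − b)‖₂²/‖p_k‖₂², x^{k+1} := x^k + δ_k p_k, η_k := ⟨AᵀS_{k+1}S_{k+1}ᵀ(Ax^{k+1} − b), p_k⟩/‖p_k‖₂², p_{k+1} := −AᵀS_{k+1}S_{k+1}ᵀ(Ax^{k+1} − b) + η_k p_k. Assume p_k ≠ 0 for all k, and write r^k := Ax^k − b. Then for every k ≥ 0: (i) ⟨p_k, p_{k+1}⟩ = 0, and (ii) (r^{k+1})ᵀ S_k S_kᵀ r^k = 0. -/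
open Matrix

/-- Proposition 5.2: for the conjugate-gradient-type recursion (5.1),
(i) consecutive search directions are orthogonal, `⟨p_k, p_{k+1}⟩ = 0`, and
(ii) consecutive residuals `r^k = A x^k − b` satisfy
`(r^{k+1})ᵀ S_k S_kᵀ r^k = 0`. -/
theorem cg_form_orthogonality
    {m n q : ℕ} (A : Matrix (Fin m) (Fin n) ℝ) (b : Fin m → ℝ)
    (S : ℕ → Matrix (Fin m) (Fin q) ℝ)
    (x p : ℕ → Fin n → ℝ)
    (hp0 : p 0 = -sgrad A b (S 0) (x 0))
    (hxrec : ∀ k, x (k + 1) = x k +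
      ((sres A b (S k) (x k) ⬝ᵥ sres A b (S k) (x k)) / (p k ⬝ᵥ p k)) • p k)
    (hprec : ∀ k, p (k + 1) = -sgrad A b (S (k + 1)) (x (k + 1)) +
      ((sgrad A b (S (k + 1)) (x (k + 1)) ⬝ᵥ p k) / (p k ⬝ᵥ p k)) • p k)
    (hpne : ∀ k, p k ≠ 0) :
    ∀ k, p k ⬝ᵥ p (k + 1) = 0 ∧
      (A.mulVec (x (k + 1)) - b) ⬝ᵥ
        ((S k).mulVec ((S k)ᵀ.mulVec (A.mulVec (x k) - b))) = 0 := by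

  have hpp : ∀ k, p k ⬝ᵥ p k ≠ 0 := fun k h => hpne k (dotProduct_self_eq_zero.mp h)
  have horth : ∀ k, p k ⬝ᵥ p (k + 1) = 0 := by
    intro k
    rw [hprec k, dotProduct_add, dotProduct_neg, dotProduct_smul, smul_eq_mul,
      div_mul_cancel₀ _ (hpp k), dotProduct_comm]
    ring
  have gkey : ∀ k, sgrad A b (S k) (x k) ⬝ᵥ p k = -(p k ⬝ᵥ p k) := by
    intro k
    cases k with
    | zero => simp [hp0, neg_dotProduct, dotProduct_neg]
    | succ k =>
        have h2 : p (k+1) ⬝ᵥ p (k+1)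
            = -(sgrad A b (S (k+1)) (x (k+1)) ⬝ᵥ p (k+1)) := by
          nth_rewrite 1 [hprec k]
          rw [add_dotProduct, neg_dotProduct, smul_dotProduct, smul_eq_mul, horth k]
          ring
        linarith
  intro k
  refine ⟨horth k, ?_⟩
  have hr : A.mulVec (x (k+1)) - b = (A.mulVec (x k) - b) +
      ((sres A b (S k) (x k) ⬝ᵥ sres A b (S k) (x k)) / (p k ⬝ᵥ p k)) •
        A.mulVec (p k) := by
    rw [hxrec k, mulVec_add, mulVec_smul]; abel
  have h1 : (A.mulVec (x k) - b) ⬝ᵥ (S k).mulVec ((S k)ᵀ.mulVec (A.mulVec (x k) - b))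
      = sres A b (S k) (x k) ⬝ᵥ sres A b (S k) (x k) := by
    rw [dotProduct_mulVec, ← mulVec_transpose]; rfl
  have h2 : A.mulVec (p k) ⬝ᵥ (S k).mulVec ((S k)ᵀ.mulVec (A.mulVec (x k) - b))
      = sgrad A b (S k) (x k) ⬝ᵥ p k := by
    rw [dotProduct_comm, dotProduct_mulVec, ← mulVec_transpose, dotProduct_comm,
      dotProduct_comm (p k)]; rfl
  rw [hr, add_dotProduct, smul_dotProduct, smul_eq_mul, h1, h2, gkey k]
  rw [mul_neg, div_mul_cancel₀ _ (hpp k)]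
  ring
end

section
/- Let A ∈ ℝ^{m×n}, b ∈ ℝ^m, and let z ∈ ℝⁿ satisfy Az = b. Let x_prev, x ∈ ℝⁿ and set r := Ax − b and r_prev := Ax_prev − b. Assume r ≠ 0, ⟨x − z, x − x_prev⟩ = 0, and ⟨r, r_prev⟩ = 0. Then Aᵀr ≠ 0, and with x̃ := x − (‖r‖₂²/‖Aᵀr‖₂²)·Aᵀr and u := ‖r‖₂²·Aᵀr − ‖Aᵀr‖₂²·(x − x_prev), it holds that ⟨x̃ − z, u⟩ = ‖r‖₂⁴; in particular ⟨x̃ − z, u⟩ > 0. -/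
open Matrix

/-- Remark 5.3: for the deterministic version of the ASHBM method (sampling
matrix `S = I`), if `r = Ax − b ≠ 0`, `⟨x − z, x − x_prev⟩ = 0` and
`⟨r, r_prev⟩ = 0` (the orthogonality relations along the iterates), then
`Aᵀr ≠ 0`, and with `x̃ = x − (‖r‖₂²/‖Aᵀr‖₂²)Aᵀr` and
`u = ‖r‖₂²Aᵀr − ‖Aᵀr‖₂²(x − x_prev)` one has `⟨x̃ − z, u⟩ = ‖r‖₂⁴ > 0`. -/
theorem deterministic_ashbm_gamma_positive
    {m n : ℕ} (A : Matrix (Fin m) (Fin n) ℝ) (b : Fin m → ℝ)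
    (z : Fin n → ℝ) (hz : A.mulVec z = b)
    (xprev x : Fin n → ℝ)
    (hr : A.mulVec x - b ≠ 0)
    (horth1 : (x - z) ⬝ᵥ (x - xprev) = 0)
    (horth2 : (A.mulVec x - b) ⬝ᵥ (A.mulVec xprev - b) = 0)
    (xt u : Fin n → ℝ)
    (hxt : xt = x - (((A.mulVec x - b) ⬝ᵥ (A.mulVec x - b)) /
        ((Aᵀ.mulVec (A.mulVec x - b)) ⬝ᵥ (Aᵀ.mulVec (A.mulVec x - b)))) •
      Aᵀ.mulVec (A.mulVec x - b))
    (hu : u = ((A.mulVec x - b) ⬝ᵥ (A.mulVec x - b)) • Aᵀ.mulVec (A.mulVec x - b)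
        - ((Aᵀ.mulVec (A.mulVec x - b)) ⬝ᵥ (Aᵀ.mulVec (A.mulVec x - b))) • (x - xprev)) :
    Aᵀ.mulVec (A.mulVec x - b) ≠ 0 ∧
      (xt - z) ⬝ᵥ u = ((A.mulVec x - b) ⬝ᵥ (A.mulVec x - b)) ^ 2 ∧
      0 < (xt - z) ⬝ᵥ u := by
  set r := A.mulVec x - b with hrdef
  set v := Aᵀ.mulVec r with hvdef
  set c := r ⬝ᵥ r with hcdef
  set d := v ⬝ᵥ v with hddef
  have hadj : ∀ w : Fin n → ℝ, w ⬝ᵥ v = A.mulVec w ⬝ᵥ r := by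
    intro w
    rw [hvdef, Matrix.dotProduct_mulVec, Matrix.vecMul_transpose]
  have h1 : (x - z) ⬝ᵥ v = c := by
    rw [hadj, Matrix.mulVec_sub, hz, hcdef, hrdef]
  have h2 : (x - xprev) ⬝ᵥ v = c := by
    rw [hadj, Matrix.mulVec_sub]
    have : A.mulVec x - A.mulVec xprev = r - (A.mulVec xprev - b) := by
      rw [hrdef]; abel
    rw [this, sub_dotProduct, dotProduct_comm (A.mulVec xprev - b) r,
      horth2, sub_zero, hcdef]
  have hc : c ≠ 0 := by
    rw [hcdef]
    intro h
    exact hr (dotProduct_self_eq_zero.mp h)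
  have hv : v ≠ 0 := by
    intro h
    apply hc
    rw [← h1, h, dotProduct_zero]
  have hxtz : xt - z = (x - z) - (c / d) • v := by
    rw [hxt]; abel
  have hmain : (xt - z) ⬝ᵥ u = c ^ 2 := by
    rw [hxtz, hu, sub_dotProduct, dotProduct_sub, dotProduct_sub,
      dotProduct_smul, dotProduct_smul, smul_dotProduct,
      smul_dotProduct, dotProduct_smul, dotProduct_smul,
      h1, horth1, dotProduct_comm v (x - xprev), h2]
    simp only [smul_eq_mul]
    ring
  refine ⟨hv, hmain, ?_⟩
  rw [hmain]
  positivity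
end
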